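/- arXiv:math/9903155 — 8 statements merged into one kernel-verified Lean document; each statement's English description precedes it below -/
import Mathlib

section
/- If l ≤ m in dominance order with l, m ∈ M_d (nonnegative d-tuples summing to d), then there exists a sequence of r = ∑_{k=1}^{d-1} ∑_{i=1}^k (m_i − l_i) simple raising operators, each of the form ρ_{i,i+1}, whose successive application to l stays inside M_d, strictly increases in dominance order at each step, and yields m. -/
/-- The simple raising operator ρ_{i,j}: add 1 to component `i`, subtract 1 from
component `j` (only acts nontrivially when `i < j`). Components are 0-indexed. -/
def rho (i j : ℕ) (l : ℕ → ℤ) : ℕ → ℤ :=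
  if i < j then fun k => if k = i then l k + 1 else if k = j then l k - 1 else l k else l

/-- Dominance order: all partial sums of `l` are at most those of `m`. -/
def Dom (l m : ℕ → ℤ) : Prop :=
  ∀ i : ℕ, ∑ k ∈ Finset.range (i + 1), l k ≤ ∑ k ∈ Finset.range (i + 1), m k

/-- `l` is a `d`-tuple of nonnegative integers summing to `d`. -/
def MemM (d : ℕ) (l : ℕ → ℤ) : Prop :=
  (∀ k, 0 ≤ l k) ∧ (∀ k, d ≤ k → l k = 0) ∧ ∑ k ∈ Finset.range d, l k = d

def Ps (l : ℕ → ℤ) (i : ℕ) : ℤ := ∑ k ∈ Finset.range (i + 1), l k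

lemma dom_iff (l m : ℕ → ℤ) : Dom l m ↔ ∀ i, Ps l i ≤ Ps m i := Iff.rfl

lemma rho_apply (j : ℕ) (l : ℕ → ℤ) (k : ℕ) :
    rho j (j + 1) l k = l k + ((if k = j then 1 else 0) + (if k = j + 1 then (-1 : ℤ) else 0)) := by
  have h : j < j + 1 := Nat.lt_succ_self j
  simp only [rho, if_pos h]
  by_cases h1 : k = j
  · subst h1; simp
  · by_cases h2 : k = j + 1 <;> simp [h1, h2, sub_eq_add_neg]

lemma Ps_rho (j : ℕ) (l : ℕ → ℤ) (k : ℕ) :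
    Ps (rho j (j + 1) l) k = if k = j then Ps l k + 1 else Ps l k := by
  unfold Ps
  simp only [rho_apply, Finset.sum_add_distrib, Finset.sum_ite_eq' (Finset.range (k + 1)),
    Finset.mem_range]
  rcases lt_trichotomy k j with h | h | h
  · have h1 : ¬ j < k + 1 := by omega
    have h2 : ¬ j + 1 < k + 1 := by omega
    simp [h1, h2, if_neg (by omega : k ≠ j)]
  · subst h
    simp [Nat.lt_succ_self]
  · have h1 : j < k + 1 := by omega
    have h2 : j + 1 < k + 1 := by omega
    simp [h1, h2, if_neg (by omega : k ≠ j)]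

lemma Ps_stable (d : ℕ) (l : ℕ → ℤ) (hl : MemM d l) (i : ℕ) (hi : d ≤ i + 1) :
    Ps l i = d := by
  unfold Ps
  rw [← hl.2.2]
  exact (Finset.sum_subset (Finset.range_subset_range.mpr hi)
    (fun x _ hx => hl.2.1 x (by simpa using hx))).symm

lemma exists_min_nat {P : ℕ → Prop} (h : ∃ n, P n) : ∃ n, P n ∧ ∀ k < n, ¬ P k := by
  classical
  exact ⟨Nat.find h, Nat.find_spec h, fun k hk => Nat.find_min h hk⟩

lemma eq_of_rsum_zero (d : ℕ) (l m : ℕ → ℤ) (hl : MemM d l) (hm : MemM d m)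
    (hlm : Dom l m) (h0 : ∑ k ∈ Finset.range (d - 1), (Ps m k - Ps l k) = 0) : l = m := by
  have hPs : ∀ k, Ps l k = Ps m k := by
    intro k
    by_cases hk : k < d - 1
    · have h := (Finset.sum_eq_zero_iff_of_nonneg
        (fun i _ => sub_nonneg.mpr (hlm i))).mp h0 k (Finset.mem_range.mpr hk)
      unfold Ps at h ⊢
      linarith
    · rw [Ps_stable d l hl k (by omega), Ps_stable d m hm k (by omega)]
  funext k
  by_cases hk : d ≤ k
  · rw [hl.2.1 k hk, hm.2.1 k hk]
  · cases k with
    | zero => simpa [Ps] using hPs 0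
    | succ n =>
      have h1 := hPs n
      have h2 := hPs (n + 1)
      have e1 : Ps l (n + 1) = Ps l n + l (n + 1) := Finset.sum_range_succ l (n + 1)
      have e2 : Ps m (n + 1) = Ps m n + m (n + 1) := Finset.sum_range_succ m (n + 1)
      linarith

lemma step_lemma (d : ℕ) (l m : ℕ → ℤ) (hl : MemM d l) (hm : MemM d m) (hlm : Dom l m)
    (i0 : ℕ) (hi0 : i0 < d - 1) (hP : Ps l i0 < Ps m i0) :
    ∃ j, j + 1 < d ∧
      MemM d (rho j (j + 1) l) ∧ Dom l (rho j (j + 1) l) ∧ Dom (rho j (j + 1) l) m ∧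
      l ≠ rho j (j + 1) l ∧
      ∑ k ∈ Finset.range (d - 1), (Ps m k - Ps (rho j (j + 1) l) k)
        = (∑ k ∈ Finset.range (d - 1), (Ps m k - Ps l k)) - 1 := by
  have hd : 2 ≤ d := by omega
  have hwit : i0 ≤ d - 2 ∧ Ps l (d - 2 + 1) = Ps m (d - 2 + 1) := by
    constructor
    · omega
    · have h21 : d - 2 + 1 = d - 1 := by omega
      rw [h21, Ps_stable d l hl (d - 1) (by omega), Ps_stable d m hm (d - 1) (by omega)]
  obtain ⟨j, ⟨hij, hjeq⟩, hjmin⟩ :=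
    exists_min_nat (P := fun j => i0 ≤ j ∧ Ps l (j + 1) = Ps m (j + 1)) ⟨d - 2, hwit⟩
  have hjle : j ≤ d - 2 := by
    by_contra hc
    exact hjmin (d - 2) (by omega) hwit
  have hjlt : Ps l j < Ps m j := by
    rcases Nat.lt_or_ge i0 j with h | h
    · by_contra hc
      have heq : Ps l j = Ps m j := le_antisymm (hlm j) (not_lt.mp hc)
      have hj1 : j - 1 + 1 = j := by omega
      exact hjmin (j - 1) (by omega) ⟨by omega, by rw [hj1]; exact heq⟩
    · have : j = i0 := by omega
      rwa [this]
  have e1 : Ps l (j + 1) = Ps l j + l (j + 1) := Finset.sum_range_succ l (j + 1)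
  have e2 : Ps m (j + 1) = Ps m j + m (j + 1) := Finset.sum_range_succ m (j + 1)
  have hlj0 : 0 < l (j + 1) := by linarith [hm.1 (j + 1)]
  have hlj1 : 1 ≤ l (j + 1) := hlj0
  have hj1d : j + 1 < d := by omega
  have hjd1 : j < d - 1 := by omega
  refine ⟨j, hj1d, ?_, ?_, ?_, ?_, ?_⟩
  · refine ⟨?_, ?_, ?_⟩
    · intro k
      have hk0 := hl.1 k
      rw [rho_apply]
      by_cases h1 : k = j
      · rw [if_pos h1, if_neg (by omega : ¬ k = j + 1)]
        omega
      · by_cases h2 : k = j + 1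
        · subst h2
          rw [if_neg h1, if_pos rfl]
          omega
        · rw [if_neg h1, if_neg h2]
          omega
    · intro k hk
      rw [rho_apply, hl.2.1 k hk, if_neg (by omega), if_neg (by omega)]; ring
    · have h1 : d - 1 + 1 = d := by omega
      have h2 : ∑ k ∈ Finset.range d, rho j (j + 1) l k = Ps (rho j (j + 1) l) (d - 1) := by
        unfold Ps; rw [h1]
      rw [h2, Ps_rho, if_neg (by omega)]
      exact Ps_stable d l hl (d - 1) (by omega)
  · intro k
    show Ps l k ≤ Ps (rho j (j + 1) l) k
    rw [Ps_rho]
    split <;> linarith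
  · intro k
    show Ps (rho j (j + 1) l) k ≤ Ps m k
    rw [Ps_rho]
    split
    · next heq => subst heq; linarith
    · exact hlm k
  · intro habs
    have := congrFun habs j
    rw [rho_apply, if_pos rfl, if_neg (by omega)] at this
    omega
  · have hcg : ∀ k ∈ Finset.range (d - 1),
        Ps m k - Ps (rho j (j + 1) l) k
          = (Ps m k - Ps l k) - (if k = j then 1 else 0) := by
      intro k _
      rw [Ps_rho]
      split <;> ring
    rw [Finset.sum_congr rfl hcg, Finset.sum_sub_distrib,
      Finset.sum_ite_eq' (Finset.range (d - 1)) j (fun _ => (1 : ℤ)),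
      if_pos (Finset.mem_range.mpr hjd1)]

lemma chain_lemma (n : ℕ) : ∀ (d : ℕ) (l m : ℕ → ℤ), MemM d l → MemM d m → Dom l m →
    (n : ℤ) = ∑ k ∈ Finset.range (d - 1), (Ps m k - Ps l k) →
    ∃ c : ℕ → ℕ → ℤ, c 0 = l ∧ c n = m ∧
      ∀ t < n, ∃ i : ℕ, i + 1 < d ∧ c (t + 1) = rho i (i + 1) (c t) ∧
        MemM d (c (t + 1)) ∧ Dom (c t) (c (t + 1)) ∧ c t ≠ c (t + 1) := by
  induction n with
  | zero =>
    intro d l m hl hm hlm hr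
    have hlmeq : l = m := eq_of_rsum_zero d l m hl hm hlm (by exact_mod_cast hr.symm)
    exact ⟨fun _ => l, rfl, hlmeq ▸ rfl, fun t ht => absurd ht (by omega)⟩
  | succ n ih =>
    intro d l m hl hm hlm hr
    have hsne : ∑ k ∈ Finset.range (d - 1), (Ps m k - Ps l k) ≠ 0 := by
      rw [← hr]; exact_mod_cast Nat.succ_ne_zero n
    obtain ⟨i0, hi0mem, hi0ne⟩ := Finset.exists_ne_zero_of_sum_ne_zero hsne
    have hP : Ps l i0 < Ps m i0 := by
      rcases lt_or_eq_of_le (hlm i0) with h | h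
      · exact h
      · exact absurd (by show Ps m i0 - Ps l i0 = 0; unfold Ps; rw [h]; ring) hi0ne
    obtain ⟨j, hj1d, hmem', hdom1, hdom2, hne, hsum⟩ :=
      step_lemma d l m hl hm hlm i0 (Finset.mem_range.mp hi0mem) hP
    have hr' : (n : ℤ) = ∑ k ∈ Finset.range (d - 1), (Ps m k - Ps (rho j (j + 1) l) k) := by
      rw [hsum, ← hr]; push_cast; ring
    obtain ⟨c, hc0, hcn, hstep⟩ := ih d (rho j (j + 1) l) m hmem' hm hdom2 hr'
    refine ⟨fun t => match t with | 0 => l | t + 1 => c t, rfl, hcn, ?_⟩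
    intro t ht
    match t with
    | 0 =>
      refine ⟨j, hj1d, hc0, ?_, ?_, ?_⟩
      · show MemM d (c 0); rw [hc0]; exact hmem'
      · show Dom l (c 0); rw [hc0]; exact hdom1
      · show l ≠ c 0; rw [hc0]; exact hne
    | t + 1 => exact hstep t (by omega)

/-- If `l ≤ m` in `M_d`, then `m` is reached from `l` by a chain of exactly
`r = ∑_{k=1}^{d-1} ∑_{i=1}^{k} (m_i - l_i)` simple raising operators of the form
`ρ_{i,i+1}`, staying inside `M_d` and strictly increasing in dominance order
at every step. -/
theorem stmt1 (d : ℕ) (l m : ℕ → ℤ) (hl : MemM d l) (hm : MemM d m) (hlm : Dom l m) :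
    ∃ (r : ℕ) (c : ℕ → ℕ → ℤ),
      (r : ℤ) = ∑ k ∈ Finset.range (d - 1), ∑ i ∈ Finset.range (k + 1), (m i - l i) ∧
      c 0 = l ∧ c r = m ∧
      ∀ t < r, ∃ i : ℕ, i + 1 < d ∧ c (t + 1) = rho i (i + 1) (c t) ∧
        MemM d (c (t + 1)) ∧ Dom (c t) (c (t + 1)) ∧ c t ≠ c (t + 1) := by
  have hsumeq : ∑ k ∈ Finset.range (d - 1), ∑ i ∈ Finset.range (k + 1), (m i - l i)
      = ∑ k ∈ Finset.range (d - 1), (Ps m k - Ps l k) := by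
    refine Finset.sum_congr rfl fun k _ => ?_
    rw [Finset.sum_sub_distrib]; rfl
  set R := ∑ k ∈ Finset.range (d - 1), (Ps m k - Ps l k) with hR
  have hRnn : 0 ≤ R := Finset.sum_nonneg fun k _ => sub_nonneg.mpr (hlm k)
  have hcast : (R.toNat : ℤ) = R := Int.toNat_of_nonneg hRnn
  obtain ⟨c, hc0, hcn, hstep⟩ := chain_lemma R.toNat d l m hl hm hlm hcast
  exact ⟨R.toNat, c, by rw [hsumeq]; exact hcast, hc0, hcn, hstep⟩
end

section
/- Two elements l, m of M_d are neighbours in the dominance order with l < m (i.e. l < m and no element n satisfies l < n < m) if and only if m = ρ_{i,i+1}(l) for some i with 1 ≤ i ≤ d−1. -/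
lemma ext_of_partial (f g : ℕ → ℤ)
    (h : ∀ i, ∑ k ∈ Finset.range (i+1), f k = ∑ k ∈ Finset.range (i+1), g k) :
    f = g := by
  funext k
  cases k with
  | zero => simpa using h 0
  | succ n =>
    have h1 := h n
    have h2 := h (n+1)
    rw [Finset.sum_range_succ, Finset.sum_range_succ g] at h2
    linarith

lemma sum_rho (l : ℕ → ℤ) (i j : ℕ) :
    ∑ k ∈ Finset.range (j+1), rho i (i+1) l k
      = (∑ k ∈ Finset.range (j+1), l k) + (if j = i then 1 else 0) := by
  have hfun : ∀ k, rho i (i+1) l k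
      = l k + ((if k = i then (1:ℤ) else 0) + (if k = i+1 then (-1:ℤ) else 0)) := by
    intro k
    simp only [rho, if_pos (Nat.lt_succ_self i)]
    rcases eq_or_ne k i with rfl | h1
    · rw [if_pos rfl, if_pos rfl, if_neg (by omega : k ≠ k + 1)]
      ring
    · rcases eq_or_ne k (i+1) with rfl | h2
      · rw [if_neg h1, if_neg h1, if_pos rfl, if_pos rfl]; ring
      · rw [if_neg h1, if_neg h1, if_neg h2, if_neg h2]; ring
  simp only [hfun, Finset.sum_add_distrib, Finset.sum_ite_eq', Finset.mem_range]
  congr 1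
  split_ifs <;> omega

lemma sum_tail (d : ℕ) (f : ℕ → ℤ) (hf : ∀ k, d ≤ k → f k = 0) (j : ℕ) (hj : d ≤ j + 1) :
    ∑ k ∈ Finset.range (j+1), f k = ∑ k ∈ Finset.range d, f k :=
  (Finset.sum_subset (Finset.range_subset_range.2 hj)
    (fun x _ hnx => hf x (by simpa using hnx))).symm

/-- `l` and `m` are neighbours in `M_d` with `l < m` (nothing of `M_d` lies strictly
between them in dominance order) iff `m = ρ_{i,i+1}(l)` for some `i`. -/
theorem stmt2 (d : ℕ) (l m : ℕ → ℤ) (hl : MemM d l) (hm : MemM d m) :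
    ((Dom l m ∧ l ≠ m) ∧
        ∀ n, MemM d n → ¬((Dom l n ∧ l ≠ n) ∧ (Dom n m ∧ n ≠ m))) ↔
      ∃ i : ℕ, i + 1 < d ∧ m = rho i (i + 1) l := by
  obtain ⟨hl0, hld, hls⟩ := hl
  obtain ⟨hm0, hmd, hms⟩ := hm
  constructor
  · rintro ⟨⟨hdom, hne⟩, hcov⟩
    have hex : ∃ j, (∑ k ∈ Finset.range (j+1), l k) < ∑ k ∈ Finset.range (j+1), m k := by
      by_contra hc
      push_neg at hc
      exact hne (ext_of_partial l m fun j => le_antisymm (hdom j) (hc j))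
    classical
    set i := Nat.find hex with hidef
    have hi : (∑ k ∈ Finset.range (i+1), l k) < ∑ k ∈ Finset.range (i+1), m k :=
      Nat.find_spec hex
    have hmin : ∀ j < i, (∑ k ∈ Finset.range (j+1), l k) = ∑ k ∈ Finset.range (j+1), m k :=
      fun j hj => le_antisymm (hdom j) (not_lt.1 (Nat.find_min hex hj))
    have hid : i + 1 < d := by
      by_contra hc
      push_neg at hc
      have h1 := sum_tail d l hld i (by omega)
      have h2 := sum_tail d m hmd i (by omega)
      omega
    set n : ℕ → ℤ := fun k => if k = i then m k - 1 else if k = i+1 then m k + 1 else m k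
      with hn
    have hmn : m = rho i (i+1) n := by
      funext k
      simp only [rho, hn, if_pos (Nat.lt_succ_self i)]
      rcases eq_or_ne k i with rfl | h1
      · rw [if_pos rfl, if_pos rfl]; ring
      · rcases eq_or_ne k (i+1) with rfl | h2
        · rw [if_neg h1, if_neg h1, if_pos rfl, if_pos rfl]; ring
        · rw [if_neg h1, if_neg h1, if_neg h2, if_neg h2]
    have hSm : ∀ j, ∑ k ∈ Finset.range (j+1), m k
        = (∑ k ∈ Finset.range (j+1), n k) + (if j = i then 1 else 0) := by
      intro j
      conv_lhs => rw [hmn]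
      exact sum_rho n i j
    -- m i ≥ 1
    have hmi : 1 ≤ m i := by
      have hprev : ∑ k ∈ Finset.range i, l k = ∑ k ∈ Finset.range i, m k := by
        rcases Nat.eq_zero_or_pos i with hz | hpos
        · rw [hz]; simp
        · have h := hmin (i-1) (by omega)
          rwa [show i - 1 + 1 = i from by omega] at h
      have e1 : ∑ k ∈ Finset.range (i+1), l k = (∑ k ∈ Finset.range i, l k) + l i :=
        Finset.sum_range_succ l i
      have e2 : ∑ k ∈ Finset.range (i+1), m k = (∑ k ∈ Finset.range i, m k) + m i :=
        Finset.sum_range_succ m i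
      have := hl0 i
      omega
    have hnmem : MemM d n := by
      refine ⟨?_, ?_, ?_⟩
      · intro k
        rcases eq_or_ne k i with rfl | h1
        · rw [hn]; simp only [if_pos rfl]; omega
        · rcases eq_or_ne k (i+1) with rfl | h2
          · rw [hn]; simp only [if_neg h1, if_pos rfl]; have := hm0 (i+1); omega
          · rw [hn]; simp only [if_neg h1, if_neg h2]; exact hm0 k
      · intro k hk
        rw [hn]
        simp only
        rw [if_neg (by omega : k ≠ i), if_neg (by omega : k ≠ i + 1)]
        exact hmd k hk
      · have h1 := hSm (d-1)
        rw [show d - 1 + 1 = d from by omega, if_neg (by omega : d - 1 ≠ i)] at h1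
        omega
    have hDomln : Dom l n := by
      intro j
      have h1 := hSm j
      have h2 := hdom j
      rcases eq_or_ne j i with rfl | hji
      · rw [if_pos rfl] at h1; omega
      · rw [if_neg hji] at h1; omega
    have hDomnm : Dom n m := by
      intro j
      have h1 := hSm j
      split_ifs at h1 <;> omega
    have hni : n i = m i - 1 := by rw [hn]; simp
    have hnme : n ≠ m := by
      intro h
      rw [h] at hni
      omega
    have hleqn : l = n := by
      by_contra hc
      exact hcov n hnmem ⟨⟨hDomln, hc⟩, hDomnm, hnme⟩
    exact ⟨i, hid, by rw [hleqn]; exact hmn⟩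
  · rintro ⟨i, hid, rfl⟩
    refine ⟨⟨?_, ?_⟩, ?_⟩
    · intro j
      rw [sum_rho]
      split_ifs <;> omega
    · intro h
      have hv : rho i (i+1) l i = l i + 1 := by
        rw [rho, if_pos (Nat.lt_succ_self i)]; simp
      have := congrFun h i
      rw [hv] at this
      omega
    · rintro n hn ⟨⟨hln, hlne⟩, hnm, hnme⟩
      have hupper : ∀ j, ∑ k ∈ Finset.range (j+1), n k
          ≤ (∑ k ∈ Finset.range (j+1), l k) + (if j = i then 1 else 0) := by
        intro j
        have := hnm j
        rwa [sum_rho] at this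
      rcases (by have := hln i; have := hupper i; rw [if_pos rfl] at this; omega :
          (∑ k ∈ Finset.range (i+1), n k) = (∑ k ∈ Finset.range (i+1), l k) ∨
          (∑ k ∈ Finset.range (i+1), n k) = (∑ k ∈ Finset.range (i+1), l k) + 1) with hc | hc
      · apply hlne
        apply ext_of_partial
        intro j
        rcases eq_or_ne j i with rfl | hji
        · omega
        · have h1 := hln j
          have h2 := hupper j
          rw [if_neg hji] at h2
          omega
      · apply hnme
        apply ext_of_partial
        intro j
        rw [sum_rho]
        rcases eq_or_ne j i with rfl | hji
        · rw [if_pos rfl]; omega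
        · have h1 := hln j
          have h2 := hupper j
          rw [if_neg hji] at h2 ⊢
          omega
end

section
/- Two partitions λ, μ of d (written as weakly decreasing d-tuples) are neighbours in the dominance order on partitions with λ < μ if and only if there exist integers 1 ≤ i < j ≤ d such that μ = ρ_{i,j}(λ) and moreover either j = i+1 or λ_i = λ_j. -/
/-- `l` is a partition of `d`: a weakly decreasing `d`-tuple of nonnegative
integers summing to `d`. -/
def MemP (d : ℕ) (l : ℕ → ℤ) : Prop :=
  MemM d l ∧ ∀ k, l (k + 1) ≤ l k

namespace Stmt3Aux
def S (l : ℕ → ℤ) (n : ℕ) : ℤ := ∑ k ∈ Finset.range (n+1), l k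

lemma dom_iff {l m : ℕ → ℤ} : Dom l m ↔ ∀ i, S l i ≤ S m i := Iff.rfl

lemma S_succ (l : ℕ → ℤ) (n : ℕ) : S l (n+1) = S l n + l (n+1) := Finset.sum_range_succ _ _

lemma eq_of_S_eq {l m : ℕ → ℤ} (h : ∀ k, S l k = S m k) : l = m := by
  funext k
  cases k with
  | zero => have := h 0; simpa [S] using this
  | succ n =>
    have h1 := h n; have h2 := h (n+1)
    rw [S_succ, S_succ] at h2; linarith

lemma S_Ico (l : ℕ → ℤ) {a b : ℕ} (hab : a ≤ b) :
    S l b = S l a + ∑ m ∈ Finset.Ico (a+1) (b+1), l m := by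
  unfold S
  simp only [Finset.range_eq_Ico]
  exact (Finset.sum_Ico_consecutive l (by omega) (by omega)).symm

lemma anti {l : ℕ → ℤ} (h : ∀ k, l (k+1) ≤ l k) {a b : ℕ} (hab : a ≤ b) : l b ≤ l a :=
  antitone_nat_of_succ_le h hab

lemma rho_apply {i j : ℕ} (hij : i < j) (l : ℕ → ℤ) (k : ℕ) :
    rho i j l k = if k = i then l k + 1 else if k = j then l k - 1 else l k := by
  simp [rho, hij]

lemma S_rho {i j : ℕ} (hij : i < j) (l : ℕ → ℤ) (k : ℕ) :
    S (rho i j l) k = S l k + (if i ≤ k then 1 else 0) - (if j ≤ k then 1 else 0) := by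
  have key : ∀ m, rho i j l m
      = l m + ((if m = i then (1:ℤ) else 0) - (if m = j then 1 else 0)) := by
    intro m
    rw [rho_apply hij]
    split_ifs with h1 h2 h3 <;> first | ring1 | (exfalso; omega)
  unfold S
  simp only [key, Finset.sum_add_distrib, Finset.sum_sub_distrib]
  rw [Finset.sum_ite_eq' (Finset.range (k+1)) i (fun _ => (1:ℤ)),
     Finset.sum_ite_eq' (Finset.range (k+1)) j (fun _ => (1:ℤ))]
  simp only [Finset.mem_range, Nat.lt_succ_iff]
  ring

lemma dom_rho {i j : ℕ} (hij : i < j) (l : ℕ → ℤ) : Dom l (rho i j l) := by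
  intro k
  have := S_rho hij l k
  show S l k ≤ S (rho i j l) k
  rw [this]
  split_ifs <;> omega

lemma rho_ne {i j : ℕ} (hij : i < j) (l : ℕ → ℤ) : l ≠ rho i j l := by
  intro h
  have := congrFun h i
  rw [rho_apply hij] at this
  simp at this

lemma S_mono {l : ℕ → ℤ} (hnn : ∀ k, 0 ≤ l k) {a b : ℕ} (hab : a ≤ b) : S l a ≤ S l b := by
  rw [S_Ico l hab]
  have : (0:ℤ) ≤ ∑ m ∈ Finset.Ico (a+1) (b+1), l m :=
    Finset.sum_nonneg fun m _ => hnn m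
  linarith

lemma S_total {d : ℕ} {l : ℕ → ℤ} (hl : MemP d l) {k : ℕ} (hk : d ≤ k + 1) : S l k = d := by
  obtain ⟨⟨hnn, h0, hsum⟩, hdec⟩ := hl
  unfold S
  rw [show k + 1 = d + (k + 1 - d) by omega]
  induction (k + 1 - d) with
  | zero => simpa using hsum
  | succ n ih => rw [← Nat.add_assoc, Finset.sum_range_succ, ih, h0 _ (by omega)]; ring

lemma rho_memP {d i j : ℕ} {l : ℕ → ℤ} (hl : MemP d l) (hij : i < j) (hjd : j < d)
    (h1 : i = 0 ∨ l i < l (i-1)) (h2 : l (j+1) < l j) : MemP d (rho i j l) := by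
  obtain ⟨⟨hnn, h0, hsum⟩, hdec⟩ := hl
  refine ⟨⟨?_, ?_, ?_⟩, ?_⟩
  · intro k
    rw [rho_apply hij]
    have := hnn k
    have hj1 : 0 ≤ l (j+1) := hnn (j+1)
    split_ifs with e1 e2
    · linarith
    · subst e2; linarith
    · exact this
  · intro k hk
    rw [rho_apply hij]
    have e1 : ¬ k = i := by omega
    have e2 : ¬ k = j := by omega
    rw [if_neg e1, if_neg e2]
    exact h0 k hk
  · have hd1 : 1 ≤ d := by omega
    have := S_rho hij l (d-1)
    unfold S at this
    rw [show d - 1 + 1 = d by omega] at this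
    rw [this, if_pos (by omega), if_pos (by omega), hsum]
    ring
  · intro k
    rw [rho_apply hij, rho_apply hij]
    have hd := hdec k
    by_cases e1 : k + 1 = i
    · rw [if_pos e1, if_neg (show ¬ k = i by omega), if_neg (show ¬ k = j by omega)]
      rcases h1 with h1 | h1
      · exfalso; omega
      · have h4 : l (i-1) = l k := by rw [show i - 1 = k by omega]
        rw [e1]; linarith
    · rw [if_neg e1]
      by_cases e2 : k + 1 = j
      · rw [if_pos e2]
        by_cases e3 : k = i
        · rw [if_pos e3]; linarith
        · rw [if_neg e3, if_neg (show ¬ k = j by omega)]; linarith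
      · rw [if_neg e2]
        by_cases e3 : k = i
        · rw [if_pos e3]; linarith
        · rw [if_neg e3]
          by_cases e4 : k = j
          · subst e4; rw [if_pos rfl]; linarith
          · rw [if_neg e4]; exact hd
lemma block_lemma {lam mu : ℕ → ℤ} (hmu : ∀ k, mu (k+1) ≤ mu k)
    (hdom : ∀ k, S lam k ≤ S mu k) (c : ℤ) (k0 q : ℕ)
    (hconst : ∀ m, k0 < m → m ≤ q → lam m = c)
    (hbase : S lam k0 + 1 ≤ S mu k0) :
    ∀ k, k0 ≤ k → k < q → S lam k + 1 ≤ S mu k := by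
  intro k hk
  induction k, hk using Nat.le_induction with
  | base => intro _; exact hbase
  | succ k hk ih =>
    intro hq
    by_contra hcon
    push_neg at hcon
    have h1 : S mu (k+1) ≤ S lam (k+1) := by omega
    have hprev : S lam k + 1 ≤ S mu k := ih (by omega)
    have hlk : lam (k+1) = c := hconst _ (by omega) (by omega)
    have hmuk : mu (k+1) ≤ c - 1 := by
      have e1 := S_succ mu k; have e2 := S_succ lam k
      omega
    have hterm : ∀ m ∈ Finset.Ico (k+1+1) (q+1), mu m ≤ lam m - 1 := by
      intro m hm
      simp only [Finset.mem_Ico] at hm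
      have hx : mu m ≤ mu (k+1) := anti hmu (by omega)
      have hy : lam m = c := hconst m (by omega) (by omega)
      linarith
    have hsum := Finset.sum_le_sum hterm
    rw [Finset.sum_sub_distrib] at hsum
    have hcard : ∑ m ∈ Finset.Ico (k+1+1) (q+1), (1:ℤ) = ((q:ℤ) - k - 1) := by
      rw [Finset.sum_const, Nat.card_Ico]
      have : q + 1 - (k + 1 + 1) = q - k - 1 := by omega
      rw [this]
      ring_nf
      omega
    rw [hcard] at hsum
    have hSq_mu := S_Ico mu (show k+1 ≤ q by omega)
    have hSq_lam := S_Ico lam (show k+1 ≤ q by omega)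
    have hdq := hdom q
    have : (1:ℤ) ≤ (q:ℤ) - k - 1 := by
      have : k + 1 + 1 ≤ q := by omega
      omega
    linarith
lemma exists_move {d : ℕ} {lam mu : ℕ → ℤ} (hl : MemP d lam) (hm : MemP d mu)
    (hdom : Dom lam mu) (hne : lam ≠ mu) :
    ∃ i j, i < j ∧ j < d ∧ (j = i + 1 ∨ lam i = lam j) ∧ MemP d (rho i j lam) ∧
      Dom (rho i j lam) mu := by
  obtain ⟨⟨hlnn, hl0, hlsum⟩, hldec⟩ := hl
  obtain ⟨⟨hmnn, hm0, hmsum⟩, hmdec⟩ := hm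
  have hdomS : ∀ k, S lam k ≤ S mu k := hdom
  have hex : ∃ k, lam k ≠ mu k := by
    by_contra h
    push_neg at h
    exact hne (funext h)
  classical
  set i := Nat.find hex with hidef
  have hi : lam i ≠ mu i := Nat.find_spec hex
  have hmin : ∀ k, k < i → lam k = mu k := by
    intro k hk
    by_contra h
    have := Nat.find_min' hex h
    omega
  have hpre : ∑ k ∈ Finset.range i, lam k = ∑ k ∈ Finset.range i, mu k :=
    Finset.sum_congr rfl fun k hk => hmin k (Finset.mem_range.mp hk)
  have hSl : S lam i = ∑ k ∈ Finset.range i, lam k + lam i := Finset.sum_range_succ _ _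
  have hSm : S mu i = ∑ k ∈ Finset.range i, mu k + mu i := Finset.sum_range_succ _ _
  have hmui : lam i + 1 ≤ mu i := by
    have := hdomS i
    have hle : lam i ≤ mu i := by omega
    have := lt_of_le_of_ne hle hi
    omega
  have hSi : S lam i + 1 ≤ S mu i := by omega
  have hid : i < d := by
    by_contra h
    push_neg at h
    exact hi (by rw [hl0 i h, hm0 i h])
  have hd1 : 1 ≤ d := by omega
  have hltot : S lam (d-1) = d := S_total ⟨⟨hlnn, hl0, hlsum⟩, hldec⟩ (by omega)
  have hmtot : S mu (d-1) = d := S_total ⟨⟨hmnn, hm0, hmsum⟩, hmdec⟩ (by omega)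
  have hStop : S mu i ≤ d := by
    have := S_mono hmnn (show i ≤ d - 1 by omega)
    omega
  -- lam i ≥ 1
  have hr1 : 1 ≤ lam i := by
    by_contra h
    push_neg at h
    have hz : lam i = 0 := le_antisymm (by omega) (hlnn i)
    have hzz : ∀ m ∈ Finset.Ico (i+1) (d-1+1), lam m = 0 := by
      intro m hm
      simp only [Finset.mem_Ico] at hm
      have := anti hldec (show i ≤ m by omega)
      have := hlnn m
      omega
    have := S_Ico lam (show i ≤ d - 1 by omega)
    rw [Finset.sum_congr rfl hzz] at this
    simp at this
    omega
  -- block of lam i : find p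
  have hexp : ∃ k, i ≤ k ∧ lam (k+1) < lam i := by
    refine ⟨d - 1, by omega, ?_⟩
    rw [show d - 1 + 1 = d by omega, hl0 d (le_refl d)]
    omega
  set p := Nat.find hexp with hpdef
  obtain ⟨hp1, hp2⟩ : i ≤ p ∧ lam (p+1) < lam i := Nat.find_spec hexp
  have hpmin : ∀ k, k < p → ¬(i ≤ k ∧ lam (k+1) < lam i) := fun k hk => Nat.find_min hexp hk
  have hblockp : ∀ m, i ≤ m → m ≤ p → lam m = lam i := by
    intro m h1 h2
    rcases Nat.eq_or_lt_of_le h1 with rfl | h1'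
    · rfl
    · have h3 := hpmin (m-1) (by omega)
      push_neg at h3
      have h4 := h3 (by omega)
      rw [show m - 1 + 1 = m by omega] at h4
      have := anti hldec h1
      omega
  have hpd : p < d := by
    by_contra h
    push_neg at h
    have := hblockp p hp1 (le_refl p)
    rw [hl0 p h] at this
    omega
  have hh1 : i = 0 ∨ lam i < lam (i-1) := by
    rcases Nat.eq_zero_or_pos i with h | h
    · exact Or.inl h
    · right
      have e1 : lam (i-1) = mu (i-1) := hmin _ (by omega)
      have e2 : mu i ≤ mu (i-1) := anti hmdec (by omega)
      omega
  rcases Nat.eq_or_lt_of_le hp1 with heq | hlt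
  · -- p = i : lam (i+1) < lam i
    rw [← heq] at hp2
    -- s = lam (i+1) ≥ 1
    have hs1 : 1 ≤ lam (i+1) := by
      by_contra h
      push_neg at h
      have hz : lam (i+1) = 0 := le_antisymm (by omega) (hlnn (i+1))
      have hzz : ∀ m ∈ Finset.Ico (i+1) (d-1+1), lam m = 0 := by
        intro m hm
        simp only [Finset.mem_Ico] at hm
        have := anti hldec (show i + 1 ≤ m by omega)
        have := hlnn m
        omega
      have := S_Ico lam (show i ≤ d - 1 by omega)
      rw [Finset.sum_congr rfl hzz] at this
      simp at this
      omega
    have hi1d : i + 1 < d := by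
      by_contra h
      push_neg at h
      have := hl0 (i+1) h
      omega
    have hexq : ∃ k, i + 1 ≤ k ∧ lam (k+1) < lam (i+1) := by
      refine ⟨d - 1, by omega, ?_⟩
      rw [show d - 1 + 1 = d by omega, hl0 d (le_refl d)]
      omega
    set q := Nat.find hexq with hqdef
    obtain ⟨hq1, hq2⟩ : i + 1 ≤ q ∧ lam (q+1) < lam (i+1) := Nat.find_spec hexq
    have hqmin : ∀ k, k < q → ¬(i + 1 ≤ k ∧ lam (k+1) < lam (i+1)) :=
      fun k hk => Nat.find_min hexq hk
    have hblockq : ∀ m, i + 1 ≤ m → m ≤ q → lam m = lam (i+1) := by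
      intro m h1 h2
      rcases Nat.eq_or_lt_of_le h1 with h1' | h1'
      · rw [← h1']
      · have h3 := hqmin (m-1) (by omega)
        push_neg at h3
        have h4 := h3 (by omega)
        rw [show m - 1 + 1 = m by omega] at h4
        have := anti hldec h1
        omega
    have hqd : q < d := by
      by_contra h
      push_neg at h
      have := hblockq q hq1 (le_refl q)
      rw [hl0 q h] at this
      omega
    rcases Nat.eq_or_lt_of_le hq1 with heq2 | hlt2
    · -- q = i+1 : use (i, i+1)
      refine ⟨i, i+1, by omega, by omega, Or.inl rfl, ?_, ?_⟩
      · refine rho_memP ⟨⟨hlnn, hl0, hlsum⟩, hldec⟩ (by omega) (by omega) hh1 ?_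
        rw [← heq2] at hq2
        exact hq2
      · intro k
        show S (rho i (i+1) lam) k ≤ S mu k
        rw [S_rho (by omega : i < i + 1)]
        by_cases e1 : i ≤ k
        · by_cases e2 : i + 1 ≤ k
          · rw [if_pos e1, if_pos e2]; have := hdomS k; omega
          · rw [if_pos e1, if_neg e2]
            have hki : k = i := by omega
            rw [hki]; omega
        · rw [if_neg e1, if_neg (show ¬ i + 1 ≤ k by omega)]
          have := hdomS k; omega
    · -- q > i+1 : use (i+1, q)
      refine ⟨i+1, q, hlt2, hqd, Or.inr (hblockq q hq1 (le_refl q)).symm, ?_, ?_⟩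
      · refine rho_memP ⟨⟨hlnn, hl0, hlsum⟩, hldec⟩ hlt2 hqd ?_ ?_
        · right
          rw [show i + 1 - 1 = i by omega]
          omega
        · rw [hblockq q hq1 (le_refl q)]
          exact hq2
      · intro k
        show S (rho (i+1) q lam) k ≤ S mu k
        rw [S_rho hlt2]
        by_cases e1 : i + 1 ≤ k
        · by_cases e2 : q ≤ k
          · rw [if_pos e1, if_pos e2]; have := hdomS k; omega
          · rw [if_pos e1, if_neg e2]
            have := block_lemma hmdec hdomS (lam (i+1)) i q
              (fun m hm1 hm2 => hblockq m (by omega) hm2) hSi k (by omega) (by omega)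
            omega
        · rw [if_neg e1, if_neg (show ¬ q ≤ k by omega)]
          have := hdomS k; omega
  · -- p > i : use (i, p)
    refine ⟨i, p, hlt, hpd, Or.inr (hblockp p hp1 (le_refl p)).symm, ?_, ?_⟩
    · refine rho_memP ⟨⟨hlnn, hl0, hlsum⟩, hldec⟩ hlt hpd hh1 ?_
      rw [hblockp p hp1 (le_refl p)]
      exact hp2
    · intro k
      show S (rho i p lam) k ≤ S mu k
      rw [S_rho hlt]
      by_cases e1 : i ≤ k
      · by_cases e2 : p ≤ k
        · rw [if_pos e1, if_pos e2]; have := hdomS k; omega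
        · rw [if_pos e1, if_neg e2]
          have := block_lemma hmdec hdomS (lam i) i p
            (fun m hm1 hm2 => hblockp m (by omega) hm2) hSi k e1 (by omega)
          omega
      · rw [if_neg e1, if_neg (show ¬ p ≤ k by omega)]
        have := hdomS k; omega
lemma no_middle {d i j : ℕ} {lam nu : ℕ → ℤ} (hn : MemP d nu)
    (hij : i < j) (hldec : ∀ k, lam (k+1) ≤ lam k)
    (hcond : j = i + 1 ∨ lam i = lam j)
    (hd1 : Dom lam nu) (hne1 : lam ≠ nu) (hd2 : Dom nu (rho i j lam)) :
    nu = rho i j lam := by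
  classical
  obtain ⟨⟨hnnn, hn0, hnsum⟩, hndec⟩ := hn
  set t : ℕ → ℤ := fun k => S nu k - S lam k with htdef
  have htr : ∀ k, t k = S nu k - S lam k := fun k => rfl
  have ht0 : ∀ k, 0 ≤ t k := by
    intro k
    have : S lam k ≤ S nu k := hd1 k
    rw [htr]; linarith
  have htle : ∀ k, t k ≤ (if i ≤ k then 1 else 0) - (if j ≤ k then 1 else 0) := by
    intro k
    have h : S nu k ≤ S (rho i j lam) k := hd2 k
    rw [S_rho hij] at h
    rw [htr]; linarith
  have hlow : ∀ k, k < i → t k = 0 := by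
    intro k hk
    have h1 := ht0 k
    have h2 := htle k
    rw [if_neg (by omega), if_neg (by omega)] at h2
    omega
  have hhigh : ∀ k, j ≤ k → t k = 0 := by
    intro k hk
    have h1 := ht0 k
    have h2 := htle k
    rw [if_pos (by omega), if_pos (by omega)] at h2
    omega
  have hmid : ∀ k, i ≤ k → k < j → t k ≤ 1 := by
    intro k hk1 hk2
    have h2 := htle k
    rw [if_pos hk1, if_neg (by omega)] at h2
    omega
  have hval : ∀ k, nu (k+1) = lam (k+1) + t (k+1) - t k := by
    intro k
    have e1 := S_succ nu k
    have e2 := S_succ lam k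
    have e3 := htr k
    have e4 := htr (k+1)
    linarith
  have hval0 : nu 0 = lam 0 + t 0 := by
    have e3 := htr 0
    have e1 : S nu 0 = nu 0 := by simp [S]
    have e2 : S lam 0 = lam 0 := by simp [S]
    linarith
  -- main claim : t = 1 on [i, j)
  have claim : ∀ k, i ≤ k → k < j → t k = 1 := by
    rcases hcond with hcnd | hcnd
    · subst hcnd
      have hti : t i = 1 := by
        by_contra h
        have h1 := ht0 i
        have h2 := hmid i (le_refl i) (by omega)
        have hti0 : t i = 0 := by omega
        refine hne1 (eq_of_S_eq fun k => ?_)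
        have hz : t k = 0 := by
          rcases lt_trichotomy k i with hk | hk | hk
          · exact hlow k hk
          · rw [hk]; exact hti0
          · exact hhigh k (by omega)
        have := htr k
        omega
      intro k hk1 hk2
      have : k = i := by omega
      rw [this]; exact hti
    · have hconst : ∀ m, i ≤ m → m ≤ j → lam m = lam i := by
        intro m h1 h2
        have e1 := anti hldec h1
        have e2 := anti hldec h2
        rw [hcnd] at e1
        omega
      have hti : t i = 1 := by
        by_contra hti
        have h1 := ht0 i
        have h2 := hmid i (le_refl i) (by omega)
        have hti0 : t i = 0 := by omega
        have hex2 : ∃ k, t k ≠ 0 := by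
          by_contra h
          push_neg at h
          refine hne1 (eq_of_S_eq fun k => ?_)
          have := h k
          have := htr k
          omega
        set a := Nat.find hex2 with hadef
        have ha : t a ≠ 0 := Nat.find_spec hex2
        have hamin : ∀ k, k < a → t k = 0 := fun k hk => not_not.mp (Nat.find_min hex2 hk)
        have hai : i ≤ a := by
          by_contra h
          push_neg at h
          exact ha (hlow a h)
        have haj : a < j := by
          by_contra h
          push_neg at h
          exact ha (hhigh a h)
        have hane : a ≠ i := fun h => ha (by rw [h]; exact hti0)
        have hai1 : i + 1 ≤ a := by omega
        have hta : t a = 1 := by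
          have := ht0 a
          have := hmid a hai haj
          omega
        have htam1 : t (a-1) = 0 := hamin (a-1) (by omega)
        have hnua := hval (a-1)
        rw [show a - 1 + 1 = a by omega] at hnua
        rw [hconst a hai (by omega), hta, htam1] at hnua
        have hnui : nu i = lam i := by
          rcases Nat.eq_zero_or_pos i with hz | hz
          · rw [hz] at hti0 ⊢
            rw [hval0, hti0]
            ring
          · have := hval (i-1)
            rw [show i - 1 + 1 = i by omega] at this
            rw [hti0, hamin (i-1) (by omega)] at this
            rw [this]; ring
        have := anti hndec hai
        rw [hnua, hnui] at this
        omega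
      by_contra hC
      push_neg at hC
      obtain ⟨g0, hg0⟩ := hC
      have hexg : ∃ k, i ≤ k ∧ k < j ∧ t k ≠ 1 := ⟨g0, hg0.1, hg0.2.1, hg0.2.2⟩
      set g := Nat.find hexg with hgdef
      obtain ⟨hgi, hgj, hgt⟩ : i ≤ g ∧ g < j ∧ t g ≠ 1 := Nat.find_spec hexg
      have hgmin : ∀ k, k < g → i ≤ k → k < j → t k = 1 := by
        intro k h1 h2 h3
        have := Nat.find_min hexg h1
        push_neg at this
        exact this h2 h3
      have hgt0 : t g = 0 := by
        have := ht0 g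
        have := hmid g hgi hgj
        omega
      have hgi' : i < g := by
        rcases Nat.eq_or_lt_of_le hgi with h | h
        · exfalso; rw [← h] at hgt0; omega
        · exact h
      have htgm1 : t (g-1) = 1 := hgmin (g-1) (by omega) (by omega) (by omega)
      have hnug := hval (g-1)
      rw [show g - 1 + 1 = g by omega] at hnug
      rw [hconst g hgi (by omega), hgt0, htgm1] at hnug
      by_cases hα : ∃ h, g < h ∧ h < j ∧ t h = 1
      · set b := Nat.find hα with hbdef
        obtain ⟨hb1, hb2, hb3⟩ : g < b ∧ b < j ∧ t b = 1 := Nat.find_spec hα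
        have hbm1 : t (b-1) = 0 := by
          by_cases e : b - 1 = g
          · rw [e]; exact hgt0
          · have h4 := Nat.find_min hα (show b - 1 < b by omega)
            have h5 := ht0 (b-1)
            have h6 := hmid (b-1) (by omega) (by omega)
            have h7 : ¬ t (b-1) = 1 := fun hh => h4 ⟨by omega, by omega, hh⟩
            omega
        have hnub := hval (b-1)
        rw [show b - 1 + 1 = b by omega] at hnub
        rw [hconst b (by omega) (by omega), hb3, hbm1] at hnub
        have := anti hndec (show g ≤ b by omega)
        rw [hnub, hnug] at this
        omega
      · push_neg at hα
        have htjm1 : t (j-1) = 0 := by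
          by_cases e : j - 1 = g
          · rw [e]; exact hgt0
          · have h5 := ht0 (j-1)
            have h6 := hmid (j-1) (by omega) (by omega)
            have h7 := hα (j-1) (by omega) (by omega)
            omega
        have hnuj := hval (j-1)
        rw [show j - 1 + 1 = j by omega] at hnuj
        rw [hhigh j (le_refl j), htjm1] at hnuj
        have hlamj : lam j = lam i := hconst j (by omega) (le_refl j)
        rw [hlamj] at hnuj
        have := anti hndec (show g ≤ j by omega)
        rw [hnuj, hnug] at this
        omega
  -- conclude
  apply eq_of_S_eq
  intro k
  rw [S_rho hij]
  have ht := htr k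
  by_cases e1 : i ≤ k
  · by_cases e2 : j ≤ k
    · rw [if_pos e1, if_pos e2]
      have := hhigh k e2
      omega
    · rw [if_pos e1, if_neg e2]
      have := claim k e1 (by omega)
      omega
  · rw [if_neg e1, if_neg (show ¬ j ≤ k by omega)]
    have := hlow k (by omega)
    omega
end Stmt3Aux

open Stmt3Aux

/-- Partitions `λ < μ` of `d` are neighbours in the dominance order on `P_d`
iff `μ = ρ_{i,j}(λ)` for some `i < j` with moreover `j = i+1` or `λ_i = λ_j`. -/
theorem stmt3 (d : ℕ) (lam mu : ℕ → ℤ) (hl : MemP d lam) (hm : MemP d mu) :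
    ((Dom lam mu ∧ lam ≠ mu) ∧
        ∀ nu, MemP d nu → ¬((Dom lam nu ∧ lam ≠ nu) ∧ (Dom nu mu ∧ nu ≠ mu))) ↔
      ∃ i j : ℕ, i < j ∧ j < d ∧ mu = rho i j lam ∧ (j = i + 1 ∨ lam i = lam j) := by
  constructor
  · rintro ⟨⟨hdm, hnem⟩, hmid⟩
    obtain ⟨i, j, hij, hjd, hcond, hmemP, hdomnm⟩ := exists_move hl hm hdm hnem
    have h1 := hmid (rho i j lam) hmemP
    have h2 : rho i j lam = mu := by
      by_contra h
      exact h1 ⟨⟨dom_rho hij lam, rho_ne hij lam⟩, hdomnm, h⟩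
    exact ⟨i, j, hij, hjd, h2.symm, hcond⟩
  · rintro ⟨i, j, hij, hjd, hmu, hcond⟩
    refine ⟨⟨?_, ?_⟩, ?_⟩
    · rw [hmu]; exact dom_rho hij lam
    · rw [hmu]; exact rho_ne hij lam
    · rintro nu hnu ⟨⟨hd1, hne1⟩, hd2, hne2⟩
      apply hne2
      rw [hmu]
      exact no_middle hnu hij hl.2 hcond hd1 hne1 (by rw [← hmu]; exact hd2)
end

section
/- For ordered dissections A, B of [1,d], one has A ≤ B in the dominance order if and only if B = R(A) for some finite product R of simple raising operators R_{i,s}. -/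
/-- An ordered dissection of `{0,…,d-1}` (indexed from 0): a sequence of pairwise
disjoint subsets, vanishing from index `d` on, whose union is everything. -/
def IsDissection (d : ℕ) (A : ℕ → Finset (Fin d)) : Prop :=
  (∀ i j, i ≠ j → Disjoint (A i) (A j)) ∧ (∀ k, d ≤ k → A k = ∅) ∧
    ∀ s : Fin d, ∃ i, s ∈ A i

/-- Dominance order on ordered dissections: each initial union of components of `A`
is contained in the corresponding one of `B`. -/
def DomD {d : ℕ} (A B : ℕ → Finset (Fin d)) : Prop :=
  ∀ i : ℕ, (Finset.range (i + 1)).biUnion A ⊆ (Finset.range (i + 1)).biUnion B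

/-- `eps A s` is the index of the component of `A` containing `s`
(the least such index; it is unique for a dissection). -/
noncomputable def eps {d : ℕ} (A : ℕ → Finset (Fin d)) (s : Fin d) : ℕ :=
  open scoped Classical in
  if h : ∃ i, s ∈ A i then Nat.find h else 0

/-- The simple raising operator `R_{i,s}`: move `s` into component `i`
if `eps A s > i`, otherwise do nothing. -/
noncomputable def Rop {d : ℕ} (i : ℕ) (s : Fin d) (A : ℕ → Finset (Fin d)) : ℕ → Finset (Fin d) :=
  if eps A s ≤ i then A
  else fun k =>
    if k = i then insert s (A k) else if k = eps A s then (A k).erase s else A k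

/-- `φ(A)`: the tuple of component cardinalities. -/
def phi {d : ℕ} (A : ℕ → Finset (Fin d)) : ℕ → ℤ :=
  fun k => ((A k).card : ℤ)

/-!
A dissection `A` is the family of fibres of its index function `eps A : Fin d → ℕ`, and
`A ≤ B` in the dominance order exactly when `eps B ≤ eps A` pointwise. A raising operator
`R_{i,s}` with `i < eps A s` replaces the single value `eps A s` by `i`, so it raises `A`.
Conversely, if `eps B < eps A`, choose `s` with `eps B s < eps A s` and apply
`R_{eps B s, s}`: the result still lies below `B`, and its index function is strictly
smaller, so well-founded induction on the pointwise order of `Fin d → ℕ` reaches `B`.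
-/

open Function

section

variable {d : ℕ} {A B : ℕ → Finset (Fin d)}

lemma mem_eps_of_mem {s : Fin d} {k : ℕ} (h : s ∈ A k) : s ∈ A (eps A s) := by
  have hex : ∃ i, s ∈ A i := ⟨k, h⟩
  rw [eps, dif_pos hex]
  exact Nat.find_spec hex

lemma eps_le_of_mem {s : Fin d} {k : ℕ} (h : s ∈ A k) : eps A s ≤ k := by
  have hex : ∃ i, s ∈ A i := ⟨k, h⟩
  rw [eps, dif_pos hex]
  exact Nat.find_min' hex h

lemma eps_eq_of_forall_mem_iff {f : Fin d → ℕ} (h : ∀ t k, t ∈ A k ↔ f t = k) : eps A = f := by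
  funext t
  have hmem : t ∈ A (f t) := (h t _).2 rfl
  exact le_antisymm (eps_le_of_mem hmem) ((h t _).1 (mem_eps_of_mem hmem)).le

lemma isDissection_of_forall_mem_iff {f : Fin d → ℕ} (hf : ∀ t, f t < d)
    (h : ∀ t k, t ∈ A k ↔ f t = k) : IsDissection d A := by
  refine ⟨fun i j hij => Finset.disjoint_left.2 fun t hi hj => ?_, fun k hk => ?_,
    fun t => ⟨f t, (h t _).2 rfl⟩⟩
  · exact hij (((h t i).1 hi).symm.trans ((h t j).1 hj))
  · exact Finset.eq_empty_of_forall_notMem fun t ht => by have := hf t; grind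

lemma domD_refl (A : ℕ → Finset (Fin d)) : DomD A A :=
  fun _ => subset_rfl

lemma DomD.trans {C : ℕ → Finset (Fin d)} (hAB : DomD A B) (hBC : DomD B C) : DomD A C :=
  fun i => (hAB i).trans (hBC i)

lemma domD_rop (A : ℕ → Finset (Fin d)) (i : ℕ) (s : Fin d) : DomD A (Rop i s A) := by
  unfold Rop
  split_ifs with hi
  · exact domD_refl A
  intro j t ht
  simp only [Finset.mem_biUnion, Finset.mem_range] at ht ⊢
  obtain ⟨k, hk, htk⟩ := ht
  by_cases hts : t = s
  · subst hts
    exact ⟨i, by have := eps_le_of_mem htk; omega, by simp⟩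
  · exact ⟨k, hk, by split_ifs <;> subst_vars <;> simp [*]⟩

namespace IsDissection

lemma mem_iff_eps_eq (hA : IsDissection d A) {t : Fin d} {k : ℕ} : t ∈ A k ↔ eps A t = k := by
  obtain ⟨i, hi⟩ := hA.2.2 t
  have hmem := mem_eps_of_mem hi
  refine ⟨fun hk => ?_, fun hk => hk ▸ hmem⟩
  by_contra hne
  exact Finset.disjoint_left.1 (hA.1 _ _ hne) hmem hk

lemma eps_lt (hA : IsDissection d A) (t : Fin d) : eps A t < d := by
  by_contra! h
  have hmem : t ∈ A (eps A t) := hA.mem_iff_eps_eq.2 rfl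
  simp [hA.2.1 _ h] at hmem

lemma ext_eps (hA : IsDissection d A) (hB : IsDissection d B) (h : eps A = eps B) : A = B := by
  funext k
  ext t
  rw [hA.mem_iff_eps_eq, hB.mem_iff_eps_eq, h]

lemma domD_iff (hA : IsDissection d A) (hB : IsDissection d B) : DomD A B ↔ eps B ≤ eps A := by
  simp only [DomD, Finset.subset_iff, Finset.mem_biUnion, Finset.mem_range, Order.lt_add_one_iff,
    hA.mem_iff_eps_eq, hB.mem_iff_eps_eq, exists_eq_right', Pi.le_def]
  refine ⟨fun h t => h _ le_rfl, fun h i t ht => (h t).trans ht⟩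

lemma mem_rop_iff (hA : IsDissection d A) {i : ℕ} {s t : Fin d} {k : ℕ} (hi : i < eps A s) :
    t ∈ Rop i s A k ↔ update (eps A) s i t = k := by
  rw [Rop, if_neg hi.not_ge]
  rcases eq_or_ne t s with rfl | hts
  · rw [update_self]
    split_ifs <;> simp [hA.mem_iff_eps_eq] <;> omega
  · rw [update_of_ne hts]
    split_ifs <;> simp [hts, hA.mem_iff_eps_eq]

lemma eps_rop (hA : IsDissection d A) {i : ℕ} {s : Fin d} (hi : i < eps A s) :
    eps (Rop i s A) = update (eps A) s i :=
  eps_eq_of_forall_mem_iff fun _ _ => hA.mem_rop_iff hi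

lemma rop (hA : IsDissection d A) (i : ℕ) (s : Fin d) : IsDissection d (Rop i s A) := by
  by_cases hi : eps A s ≤ i
  · rwa [Rop, if_pos hi]
  refine isDissection_of_forall_mem_iff (fun t => ?_) fun _ _ => hA.mem_rop_iff (not_le.1 hi)
  rcases eq_or_ne t s with rfl | hts
  · simpa using (not_le.1 hi).trans (hA.eps_lt t)
  · simpa [update_of_ne hts] using hA.eps_lt t

end IsDissection

def IsRaisingStep (A B : ℕ → Finset (Fin d)) : Prop :=
  ∃ (i : ℕ) (s : Fin d), B = Rop i s A

lemma DomD.of_reflTransGen (h : Relation.ReflTransGen IsRaisingStep A B) : DomD A B := by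
  induction h with
  | refl => exact domD_refl A
  | tail _ hstep ih =>
    obtain ⟨i, s, rfl⟩ := hstep
    exact ih.trans (domD_rop _ i s)

lemma IsDissection.reflTransGen_of_domD (hA : IsDissection d A) (hB : IsDissection d B)
    (hAB : DomD A B) : Relation.ReflTransGen IsRaisingStep A B := by
  induction A using (InvImage.wf eps wellFounded_lt).induction with
  | _ A ih =>
    have hle : eps B ≤ eps A := (hA.domD_iff hB).1 hAB
    rcases hle.eq_or_lt with heq | hlt
    · rw [hA.ext_eps hB heq.symm]
    obtain ⟨s, hs⟩ := (Pi.lt_def.1 hlt).2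
    have hA' := hA.rop (eps B s) s
    have heps := hA.eps_rop hs
    refine .head ⟨eps B s, s, rfl⟩ (ih _ ?_ hA' ?_)
    · show eps _ < eps A
      exact heps ▸ update_lt_self_iff.2 hs
    · rw [hA'.domD_iff hB, heps, le_update_iff]
      exact ⟨le_rfl, fun t _ => hle t⟩

end

/-- `A ≤ B` in the dominance order on ordered dissections iff `B` is obtained from `A`
by a finite product of simple raising operators `R_{i,s}`. -/
theorem stmt5 (d : ℕ) (A B : ℕ → Finset (Fin d))
    (hA : IsDissection d A) (hB : IsDissection d B) :
    DomD A B ↔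
      Relation.ReflTransGen (fun X Y => ∃ (i : ℕ) (s : Fin d), Y = Rop i s X) A B :=
  ⟨hA.reflTransGen_of_domD hB, DomD.of_reflTransGen⟩
end

section
/- Any two simple raising operators R_{i,s} and R_{i',s'} on the set of ordered dissections of [1,d] commute. -/
open scoped Classical in
lemma eps_eq_of_unique {d : ℕ} {A : ℕ → Finset (Fin d)} {s : Fin d} {m : ℕ}
    (h : ∀ k, s ∈ A k ↔ k = m) : eps A s = m := by
  have hex : ∃ i, s ∈ A i := ⟨m, (h m).2 rfl⟩
  rw [eps, dif_pos hex]
  exact (h _).1 (Nat.find_spec hex)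

open scoped Classical in
lemma eps_congr {d : ℕ} {A B : ℕ → Finset (Fin d)} {s : Fin d}
    (h : ∀ k, s ∈ B k ↔ s ∈ A k) : eps B s = eps A s := by
  unfold eps
  by_cases hex : ∃ i, s ∈ A i
  · have hex' : ∃ i, s ∈ B i := by obtain ⟨j, hj⟩ := hex; exact ⟨j, (h j).2 hj⟩
    rw [dif_pos hex, dif_pos hex']
    exact le_antisymm (Nat.find_le ((h _).2 (Nat.find_spec hex)))
      (Nat.find_le ((h _).1 (Nat.find_spec hex')))
  · have hex' : ¬ ∃ i, s ∈ B i := by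
      rintro ⟨j, hj⟩; exact hex ⟨j, (h j).1 hj⟩
    rw [dif_neg hex, dif_neg hex']

lemma mem_iff_of_dissection {d : ℕ} {A : ℕ → Finset (Fin d)} (hA : IsDissection d A)
    (s : Fin d) (k : ℕ) : s ∈ A k ↔ k = eps A s := by
  classical
  have hex : ∃ i, s ∈ A i := hA.2.2 s
  have heps : s ∈ A (eps A s) := by rw [eps, dif_pos hex]; exact Nat.find_spec hex
  constructor
  · intro hk
    by_contra hne
    exact (Finset.disjoint_left.mp (hA.1 _ _ hne) hk) heps
  · rintro rfl; exact heps

lemma mem_Rop_of_ne {d : ℕ} {s t : Fin d} (hts : t ≠ s) (i : ℕ)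
    (A : ℕ → Finset (Fin d)) (k : ℕ) : (t ∈ Rop i s A k ↔ t ∈ A k) := by
  unfold Rop
  split
  · rfl
  · by_cases h1 : k = i
    · subst h1; simp [Finset.mem_insert, hts]
    · by_cases h2 : k = eps A s
      · simp only [if_neg h1, if_pos h2]; simp [hts]
      · simp only [if_neg h1, if_neg h2]

lemma mem_Rop_self {d : ℕ} {A : ℕ → Finset (Fin d)} {s : Fin d}
    (hmem : ∀ k, s ∈ A k ↔ k = eps A s) (i : ℕ) (k : ℕ) :
    (s ∈ Rop i s A k ↔ k = min i (eps A s)) := by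
  unfold Rop
  split
  · next h => rw [min_eq_right h]; exact hmem k
  · next h =>
    push_neg at h
    rw [min_eq_left h.le]
    by_cases h1 : k = i
    · simp [h1]
    · by_cases h2 : k = eps A s
      · simp only [if_neg h1, if_pos h2]; simp [h1]
      · simp only [if_neg h1, if_neg h2]; rw [hmem k]; simp [h1, h2]

lemma eps_Rop_self {d : ℕ} {A : ℕ → Finset (Fin d)} {s : Fin d}
    (hmem : ∀ k, s ∈ A k ↔ k = eps A s) (i : ℕ) :
    eps (Rop i s A) s = min i (eps A s) :=
  eps_eq_of_unique (mem_Rop_self hmem i)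


/-- Any two simple raising operators on ordered dissections commute. -/
theorem stmt6 (d : ℕ) (i i' : ℕ) (s s' : Fin d) (A : ℕ → Finset (Fin d))
    (hA : IsDissection d A) :
    Rop i s (Rop i' s' A) = Rop i' s' (Rop i s A) := by
  classical
  have hmA : ∀ t k, (t : Fin d) ∈ A k ↔ k = eps A t := fun t k => mem_iff_of_dissection hA t k
  funext k
  ext t
  by_cases hts : t = s
  · subst hts
    by_cases hss' : t = s'
    · -- s = s'
      subst hss'
      have hB : ∀ k, t ∈ Rop i' t A k ↔ k = eps (Rop i' t A) t := by
        intro k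
        rw [eps_Rop_self (hmA t) i']
        exact mem_Rop_self (hmA t) i' k
      have hC : ∀ k, t ∈ Rop i t A k ↔ k = eps (Rop i t A) t := by
        intro k
        rw [eps_Rop_self (hmA t) i]
        exact mem_Rop_self (hmA t) i k
      rw [mem_Rop_self hB i k, mem_Rop_self hC i' k,
        eps_Rop_self (hmA t) i', eps_Rop_self (hmA t) i, min_left_comm]
    · -- t = s ≠ s'
      have hB : ∀ k, t ∈ Rop i' s' A k ↔ k = eps (Rop i' s' A) t := by
        intro k
        rw [eps_congr (fun k => mem_Rop_of_ne hss' i' A k),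
          mem_Rop_of_ne hss' i' A k]
        exact hmA t k
      rw [mem_Rop_self hB i k, mem_Rop_of_ne hss' i' _ k, mem_Rop_self (hmA t) i k,
        eps_congr (fun k => mem_Rop_of_ne hss' i' A k)]
  · by_cases hts' : t = s'
    · subst hts'
      have hC : ∀ k, t ∈ Rop i s A k ↔ k = eps (Rop i s A) t := by
        intro k
        rw [eps_congr (fun k => mem_Rop_of_ne hts i A k), mem_Rop_of_ne hts i A k]
        exact hmA t k
      rw [mem_Rop_of_ne hts i _ k, mem_Rop_self (hmA t) i' k, mem_Rop_self hC i' k,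
        eps_congr (fun k => mem_Rop_of_ne hts i A k)]
    · rw [mem_Rop_of_ne hts i _ k, mem_Rop_of_ne hts' i' A k,
        mem_Rop_of_ne hts' i' _ k, mem_Rop_of_ne hts i A k]
end

section
/- Two ordered dissections A, B of [1,d] are neighbours in the dominance order on Δ_d with A < B if and only if there exist i, s ∈ [1,d] with ε_A(s) = i+1 and B = R_{i,s}(A). -/
lemma eps_mem {d : ℕ} {A : ℕ → Finset (Fin d)} (hA : IsDissection d A) (s : Fin d) :
    s ∈ A (eps A s) := by
  have h : ∃ i, s ∈ A i := hA.2.2 s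
  unfold eps
  rw [dif_pos h]
  exact Nat.find_spec h

lemma eps_eq {d : ℕ} {A : ℕ → Finset (Fin d)} (hA : IsDissection d A) {s : Fin d} {j : ℕ}
    (hj : s ∈ A j) : eps A s = j := by
  by_contra hne
  exact (Finset.disjoint_left.mp (hA.1 _ _ hne) (eps_mem hA s)) hj

lemma mem_iff_eps {d : ℕ} {A : ℕ → Finset (Fin d)} (hA : IsDissection d A) {s : Fin d} {j : ℕ} :
    s ∈ A j ↔ eps A s = j :=
  ⟨eps_eq hA, fun h => h ▸ eps_mem hA s⟩

lemma eps_lt {d : ℕ} {A : ℕ → Finset (Fin d)} (hA : IsDissection d A) (s : Fin d) :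
    eps A s < d := by
  by_contra h
  have := hA.2.1 _ (Nat.le_of_not_lt h)
  exact absurd (eps_mem hA s) (by simp [this])

lemma mem_U_iff {d : ℕ} {A : ℕ → Finset (Fin d)} (hA : IsDissection d A) {x : Fin d} {j : ℕ} :
    x ∈ (Finset.range (j + 1)).biUnion A ↔ eps A x ≤ j := by
  simp only [Finset.mem_biUnion, Finset.mem_range, Nat.lt_succ_iff]
  constructor
  · rintro ⟨k, hk, hx⟩; exact (eps_eq hA hx) ▸ hk
  · intro h; exact ⟨eps A x, h, eps_mem hA x⟩

lemma dissection_ext {d : ℕ} {A B : ℕ → Finset (Fin d)} (hA : IsDissection d A)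
    (hB : IsDissection d B)
    (h : ∀ j, (Finset.range (j + 1)).biUnion A = (Finset.range (j + 1)).biUnion B) :
    A = B := by
  have heps : ∀ x, eps A x = eps B x := by
    intro x
    have h1 : eps A x ≤ eps B x := (mem_U_iff hA).mp ((h (eps B x)) ▸ (mem_U_iff hB).mpr le_rfl)
    have h2 : eps B x ≤ eps A x := (mem_U_iff hB).mp ((h (eps A x)).symm ▸ (mem_U_iff hA).mpr le_rfl)
    omega
  funext j
  ext x
  rw [mem_iff_eps hA, mem_iff_eps hB, heps x]

lemma mem_Rop {d : ℕ} {A : ℕ → Finset (Fin d)} (hA : IsDissection d A) {i : ℕ} {s : Fin d}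
    (h : eps A s = i + 1) (x : Fin d) (k : ℕ) :
    x ∈ Rop i s A k ↔ (if x = s then k = i else x ∈ A k) := by
  rw [Rop, if_neg (by omega), h]
  have hsA : ∀ m, m ≠ i + 1 → s ∉ A m := by
    intro m hm hsm; exact hm (eps_eq hA hsm ▸ h.symm ▸ rfl)
  by_cases hx : x = s
  · subst hx
    by_cases hk : k = i
    · simp [hk]
    · by_cases hk2 : k = i + 1
      · simp [hk, hk2]
      · simp [hk, hk2, hsA k hk2]
  · by_cases hk : k = i
    · simp [hk, hx]
    · by_cases hk2 : k = i + 1 <;> simp [hk, hk2, hx]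

lemma Rop_dissection {d : ℕ} {A : ℕ → Finset (Fin d)} (hA : IsDissection d A) {i : ℕ} {s : Fin d}
    (h : eps A s = i + 1) : IsDissection d (Rop i s A) := by
  have hid : i + 1 < d := h ▸ eps_lt hA s
  refine ⟨?_, ?_, ?_⟩
  · intro k l hkl
    rw [Finset.disjoint_left]
    intro x hxk hxl
    rw [mem_Rop hA h] at hxk hxl
    by_cases hx : x = s
    · rw [if_pos hx] at hxk hxl; omega
    · rw [if_neg hx] at hxk hxl
      exact (Finset.disjoint_left.mp (hA.1 _ _ hkl) hxk) hxl
  · intro k hk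
    ext x
    rw [mem_Rop hA h]
    by_cases hx : x = s
    · simp [hx]; omega
    · simp [hx, hA.2.1 k hk]
  · intro x
    by_cases hx : x = s
    · exact ⟨i, by rw [mem_Rop hA h, if_pos hx]⟩
    · exact ⟨eps A x, by rw [mem_Rop hA h, if_neg hx]; exact eps_mem hA x⟩

lemma eps_Rop {d : ℕ} {A : ℕ → Finset (Fin d)} (hA : IsDissection d A) {i : ℕ} {s : Fin d}
    (h : eps A s = i + 1) (x : Fin d) :
    eps (Rop i s A) x = if x = s then i else eps A x := by
  apply eps_eq (Rop_dissection hA h)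
  rw [mem_Rop hA h]
  by_cases hx : x = s <;> simp [hx, eps_mem hA x]

lemma U_Rop {d : ℕ} {A : ℕ → Finset (Fin d)} (hA : IsDissection d A) {i : ℕ} {s : Fin d}
    (h : eps A s = i + 1) (j : ℕ) :
    (Finset.range (j + 1)).biUnion (Rop i s A) =
      if i ≤ j then insert s ((Finset.range (j + 1)).biUnion A)
      else (Finset.range (j + 1)).biUnion A := by
  have hC := Rop_dissection hA h
  ext x
  rw [mem_U_iff hC, eps_Rop hA h]
  by_cases hx : x = s
  · subst hx
    by_cases hij : i ≤ j <;>
      simp [hij, mem_U_iff hA, h]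
    omega
  · by_cases hij : i ≤ j <;> simp [hij, hx, mem_U_iff hA]

/-- Ordered dissections `A < B` are neighbours in `Δ_d` (no dissection lies strictly
between them) iff `B = R_{i,s}(A)` for some `i`, `s` with `ε_A(s) = i + 1`. -/
theorem stmt10 (d : ℕ) (A B : ℕ → Finset (Fin d))
    (hA : IsDissection d A) (hB : IsDissection d B) :
    ((DomD A B ∧ A ≠ B) ∧
        ∀ C, IsDissection d C → ¬((DomD A C ∧ A ≠ C) ∧ (DomD C B ∧ C ≠ B))) ↔
      ∃ (i : ℕ) (s : Fin d), eps A s = i + 1 ∧ B = Rop i s A := by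
  constructor
  · rintro ⟨⟨hd, hne⟩, hmin⟩
    -- find an index where initial unions differ
    have hex : ∃ j, (Finset.range (j + 1)).biUnion A ≠ (Finset.range (j + 1)).biUnion B := by
      by_contra hc
      push_neg at hc
      exact hne (dissection_ext hA hB hc)
    obtain ⟨j, hj⟩ := hex
    obtain ⟨s, hs1, hs2⟩ := Finset.exists_of_ssubset (lt_of_le_of_ne (hd j) hj)
    have hm : j < eps A s := by
      by_contra hc
      exact hs2 ((mem_U_iff hA).mpr (Nat.le_of_not_lt hc))
    set i := eps A s - 1 with hi
    have heq : eps A s = i + 1 := by omega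
    have hC := Rop_dissection hA heq
    have hCB : DomD (Rop i s A) B := by
      intro k
      rw [U_Rop hA heq]
      by_cases hik : i ≤ k
      · rw [if_pos hik]
        intro x hx
        rcases Finset.mem_insert.mp hx with rfl | hx
        · exact (mem_U_iff hB).mpr (le_trans ((mem_U_iff hB).mp hs1) (by omega))
        · exact hd k hx
      · rw [if_neg hik]; exact hd k
    have hAC : DomD A (Rop i s A) := by
      intro k
      rw [U_Rop hA heq]
      by_cases hik : i ≤ k
      · rw [if_pos hik]; exact Finset.subset_insert _ _
      · rw [if_neg hik]
    have hACne : A ≠ Rop i s A := by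
      intro hcon
      have : s ∈ Rop i s A i := by rw [mem_Rop hA heq, if_pos rfl]
      rw [← hcon] at this
      have := eps_eq hA this
      omega
    have := hmin (Rop i s A) hC
    push_neg at this
    have hCBeq := this ⟨hAC, hACne⟩ hCB
    exact ⟨i, s, heq, hCBeq.symm⟩
  · rintro ⟨i, s, heq, rfl⟩
    have hC := Rop_dissection hA heq
    have hsUA : ∀ j, s ∈ (Finset.range (j + 1)).biUnion A ↔ i + 1 ≤ j := by
      intro j; rw [mem_U_iff hA, heq]
    refine ⟨⟨?_, ?_⟩, ?_⟩
    · intro k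
      rw [U_Rop hA heq]
      by_cases hik : i ≤ k
      · rw [if_pos hik]; exact Finset.subset_insert _ _
      · rw [if_neg hik]
    · intro hcon
      have : s ∈ Rop i s A i := by rw [mem_Rop hA heq, if_pos rfl]
      rw [← hcon] at this
      have := eps_eq hA this
      omega
    · rintro C hCd ⟨⟨hAC, hACne⟩, hCB, hCBne⟩
      have hUB : ∀ l, (Finset.range (l+1)).biUnion (Rop i s A) =
          if l = i then insert s ((Finset.range (l+1)).biUnion A)
          else (Finset.range (l+1)).biUnion A := by
        intro l
        rw [U_Rop hA heq]
        by_cases hl : l = i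
        · simp [hl]
        · by_cases hil : i ≤ l
          · have : i + 1 ≤ l := by omega
            rw [if_pos hil, if_neg hl, Finset.insert_eq_self.mpr ((hsUA l).mpr this)]
          · rw [if_neg hil, if_neg hl]
      have hne' : ∀ l, l ≠ i →
          (Finset.range (l+1)).biUnion C = (Finset.range (l+1)).biUnion A := by
        intro l hl
        have h2 := hCB l
        rw [hUB l, if_neg hl] at h2
        exact Finset.Subset.antisymm h2 (hAC l)
      by_cases hsC : s ∈ (Finset.range (i+1)).biUnion C
      · apply hCBne
        apply dissection_ext hCd hC
        intro l
        rw [hUB l]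
        by_cases hl : l = i
        · subst hl
          rw [if_pos rfl]
          have h2 := hCB l; rw [hUB l, if_pos rfl] at h2
          exact Finset.Subset.antisymm h2 (Finset.insert_subset hsC (hAC l))
        · rw [if_neg hl]; exact hne' l hl
      · exact hACne (dissection_ext hA hCd (fun l => by
          by_cases hl : l = i
          · subst hl
            have h2 := hCB l; rw [hUB l, if_pos rfl] at h2
            refine Finset.Subset.antisymm (hAC l) (fun x hx => ?_)
            rcases Finset.mem_insert.mp (h2 hx) with rfl | hxA
            · exact absurd hx hsC
            · exact hxA
          · exact (hne' l hl).symm))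
end

section
/- Let A, B be ordered dissections of [1,d] that are neighbours in Δ_d with A < B, and let ζ be a permutation of [1,d] with ζA ≤ B (where ζ acts componentwise on dissections). Then ζA < B and ζA, B are neighbours in Δ_d. -/
/-- The componentwise action of a permutation on an ordered dissection. -/
def actP {d : ℕ} (ζ : Equiv.Perm (Fin d)) (A : ℕ → Finset (Fin d)) :
    ℕ → Finset (Fin d) :=
  fun k => (A k).image ζ

namespace Aux14

variable {d : ℕ} {A B : ℕ → Finset (Fin d)}

def U (A : ℕ → Finset (Fin d)) (i : ℕ) : Finset (Fin d) := (Finset.range (i+1)).biUnion A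

def f (d : ℕ) (A : ℕ → Finset (Fin d)) : ℕ := ∑ i ∈ Finset.range d, (U A i).card

lemma eps_mem (hA : IsDissection d A) (s : Fin d) : s ∈ A (eps A s) := by
  classical
  have h := hA.2.2 s
  simp only [eps, dif_pos h]
  convert Nat.find_spec h

lemma eps_eq (hA : IsDissection d A) {s : Fin d} {k : ℕ} (hs : s ∈ A k) : eps A s = k := by
  by_contra hne
  have := (hA.1 _ _ hne).le_bot (Finset.mem_inter.mpr ⟨eps_mem hA s, hs⟩)
  simp at this

lemma eps_lt (hA : IsDissection d A) (s : Fin d) : eps A s < d := by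
  by_contra h
  have := hA.2.1 _ (le_of_not_gt h)
  exact absurd (eps_mem hA s) (by simp [this])

lemma mem_U (hA : IsDissection d A) {s : Fin d} {j : ℕ} : s ∈ U A j ↔ eps A s ≤ j := by
  constructor
  · rintro hs
    obtain ⟨k, hk, hmem⟩ := Finset.mem_biUnion.mp hs
    rw [eps_eq hA hmem]
    simp at hk
    omega
  · intro h
    exact Finset.mem_biUnion.mpr ⟨eps A s, Finset.mem_range.mpr (by omega), eps_mem hA s⟩

lemma U_mono {i j : ℕ} (h : i ≤ j) : U A i ⊆ U A j :=
  Finset.biUnion_subset_biUnion_of_subset_left _ (Finset.range_subset_range.mpr (by omega))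

lemma eq_of_U (hA : IsDissection d A) (hB : IsDissection d B)
    (h : ∀ j, j < d → U A j = U B j) : A = B := by
  have heps : ∀ s : Fin d, eps A s = eps B s := by
    intro s
    have h1 : eps B s ≤ eps A s := by
      have := (mem_U hB (s := s) (j := eps A s)).mp
        (by rw [← h _ (eps_lt hA s)]; exact (mem_U hA).mpr le_rfl)
      exact this
    have h2 : eps A s ≤ eps B s := by
      have := (mem_U hA (s := s) (j := eps B s)).mp
        (by rw [h _ (eps_lt hB s)]; exact (mem_U hB).mpr le_rfl)
      exact this
    omega
  funext k
  ext x
  constructor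
  · intro hx
    have := eps_eq hA hx
    rw [heps] at this
    exact this ▸ eps_mem hB x
  · intro hx
    have := eps_eq hB hx
    rw [← heps] at this
    exact this ▸ eps_mem hA x

lemma f_lt (hA : IsDissection d A) (hB : IsDissection d B) (hd : DomD A B)
    (hne : A ≠ B) : f d A < f d B := by
  have hsub : ∀ j, U A j ⊆ U B j := hd
  have : ∃ j, j < d ∧ U A j ≠ U B j := by
    by_contra h
    push_neg at h
    exact hne (eq_of_U hA hB h)
  obtain ⟨j, hj, hUne⟩ := this
  apply Finset.sum_lt_sum
  · intro i _
    exact Finset.card_le_card (hsub i)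
  · exact ⟨j, Finset.mem_range.mpr hj,
      Finset.card_lt_card (lt_of_le_of_ne (hsub j) hUne)⟩

lemma actP_diss (hA : IsDissection d A) (ζ : Equiv.Perm (Fin d)) :
    IsDissection d (actP ζ A) := by
  refine ⟨?_, ?_, ?_⟩
  · intro i j hij
    rw [Finset.disjoint_left]
    intro x hx hx'
    simp only [actP, Finset.mem_image] at hx hx'
    obtain ⟨a, ha, rfl⟩ := hx
    obtain ⟨b, hb, hab⟩ := hx'
    have : b = a := ζ.injective hab
    subst this
    have := (hA.1 i j hij).le_bot (Finset.mem_inter.mpr ⟨ha, hb⟩)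
    simp at this
  · intro k hk
    simp [actP, hA.2.1 k hk]
  · intro s
    obtain ⟨i, hi⟩ := hA.2.2 (ζ.symm s)
    exact ⟨i, Finset.mem_image.mpr ⟨ζ.symm s, hi, ζ.apply_symm_apply s⟩⟩

lemma U_actP (ζ : Equiv.Perm (Fin d)) (j : ℕ) :
    U (actP ζ A) j = (U A j).image ζ := by
  ext x
  simp only [U, actP, Finset.mem_biUnion, Finset.mem_image]
  constructor
  · rintro ⟨k, hk, a, ha, rfl⟩
    exact ⟨a, ⟨k, hk, ha⟩, rfl⟩
  · rintro ⟨a, ⟨k, hk, ha⟩, rfl⟩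
    exact ⟨k, hk, a, ha, rfl⟩

lemma f_actP (ζ : Equiv.Perm (Fin d)) : f d (actP ζ A) = f d A := by
  unfold f
  refine Finset.sum_congr rfl fun j _ => ?_
  rw [U_actP, Finset.card_image_of_injective _ ζ.injective]

lemma interp (hA : IsDissection d A) (hB : IsDissection d B) (hd : DomD A B)
    (hf : f d A + 2 ≤ f d B) :
    ∃ C, IsDissection d C ∧ DomD A C ∧ A ≠ C ∧ DomD C B ∧ C ≠ B := by
  classical
  have hsub : ∀ j, U A j ⊆ U B j := hd
  -- find a level where the initial unions differ
  have hex : ∃ j, j < d ∧ (U A j).card < (U B j).card := by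
    by_contra h
    push_neg at h
    have : f d B ≤ f d A := Finset.sum_le_sum fun j hj => h j (Finset.mem_range.mp hj)
    omega
  obtain ⟨i, hi, hcard⟩ := hex
  have hss : U A i ⊂ U B i := lt_of_le_of_ne (hsub i) (fun h => by simp [h] at hcard)
  obtain ⟨s, hsB, hsA⟩ := Finset.exists_of_ssubset hss
  set e := eps A s with he
  have hie : i < e := by
    by_contra h
    exact hsA ((mem_U hA).mpr (by omega))
  set c := e - 1 with hc
  have hce : c + 1 = e := by
    have := hie
    omega
  have hcd : c < d := by have := eps_lt hA s; omega
  have hed : e < d := eps_lt hA s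
  have hsAe : s ∈ A e := eps_mem hA s
  have hsAc : s ∉ A c := fun h => by
    have := eps_eq hA h
    omega
  set C : ℕ → Finset (Fin d) := fun k =>
    if k = c then insert s (A k) else if k = e then (A k).erase s else A k with hCdef
  have hsAk : ∀ k, k ≠ e → s ∉ A k := by
    intro k hk h
    exact hk (eps_eq hA h).symm
  have mem_C : ∀ (x : Fin d) (k : ℕ), x ∈ C k ↔ ((x = s ∧ k = c) ∨ (x ≠ s ∧ x ∈ A k)) := by
    intro x k
    by_cases hxs : x = s
    · subst hxs
      by_cases hkc : k = c
      · subst hkc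
        simp [hCdef]
      · by_cases hke : k = e
        · subst hke
          simp only [hCdef, if_neg hkc, if_pos rfl, Finset.mem_erase]
          simp [hkc]
        · simp [hCdef, hkc, hke, hsAk k hke]
    · by_cases hkc : k = c
      · subst hkc
        simp [hCdef, hxs]
      · by_cases hke : k = e
        · subst hke
          simp [hCdef, hkc, hxs]
        · simp [hCdef, hkc, hke, hxs]
  have mem_UC : ∀ (x : Fin d) (j : ℕ), x ∈ U C j ↔ ((x = s ∧ c ≤ j) ∨ (x ≠ s ∧ x ∈ U A j)) := by
    intro x j
    constructor
    · intro hx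
      obtain ⟨k, hk, hmem⟩ := Finset.mem_biUnion.mp hx
      simp only [Finset.mem_range] at hk
      rcases (mem_C x k).mp hmem with ⟨rfl, rfl⟩ | ⟨hxs, hxk⟩
      · exact Or.inl ⟨rfl, by omega⟩
      · exact Or.inr ⟨hxs, Finset.mem_biUnion.mpr ⟨k, Finset.mem_range.mpr hk, hxk⟩⟩
    · rintro (⟨rfl, hcj⟩ | ⟨hxs, hxj⟩)
      · exact Finset.mem_biUnion.mpr ⟨c, Finset.mem_range.mpr (by omega),
          (mem_C x c).mpr (Or.inl ⟨rfl, rfl⟩)⟩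
      · obtain ⟨k, hk, hmem⟩ := Finset.mem_biUnion.mp hxj
        exact Finset.mem_biUnion.mpr ⟨k, hk, (mem_C x k).mpr (Or.inr ⟨hxs, hmem⟩)⟩
  have hCdiss : IsDissection d C := by
    refine ⟨?_, ?_, ?_⟩
    · intro k l hkl
      rw [Finset.disjoint_left]
      intro x hx hx'
      rcases (mem_C x k).mp hx with ⟨rfl, rfl⟩ | ⟨hxs, hxk⟩
      · rcases (mem_C x l).mp hx' with ⟨_, rfl⟩ | ⟨hxs, hxl⟩
        · exact hkl rfl
        · exact hxs rfl
      · rcases (mem_C x l).mp hx' with ⟨rfl, rfl⟩ | ⟨_, hxl⟩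
        · exact hxs rfl
        · have := (hA.1 k l hkl).le_bot (Finset.mem_inter.mpr ⟨hxk, hxl⟩)
          simp at this
    · intro k hk
      have h1 : k ≠ c := by omega
      have h2 : k ≠ e := by omega
      simp [hCdef, h1, h2, hA.2.1 k hk]
    · intro x
      by_cases hxs : x = s
      · exact ⟨c, (mem_C x c).mpr (Or.inl ⟨hxs, rfl⟩)⟩
      · obtain ⟨k, hk⟩ := hA.2.2 x
        exact ⟨k, (mem_C x k).mpr (Or.inr ⟨hxs, hk⟩)⟩
  have hUC : ∀ j, U C j = if j = c then insert s (U A j) else U A j := by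
    intro j
    ext x
    rw [mem_UC]
    by_cases hjc : j = c
    · subst hjc
      simp only [if_pos rfl, Finset.mem_insert]
      by_cases hxs : x = s
      · simp [hxs]
      · simp [hxs]
    · rw [if_neg hjc]
      by_cases hxs : x = s
      · subst hxs
        rw [mem_U hA]
        simp only [ne_eq, not_true_eq_false, false_and, or_false]
        constructor
        · rintro ⟨-, h⟩; omega
        · intro h; exact ⟨by trivial, by omega⟩
      · simp [hxs]
  refine ⟨C, hCdiss, ?_, ?_, ?_, ?_⟩
  · intro j x hx
    by_cases hxs : x = s
    · subst hxs
      have : e ≤ j := (mem_U hA).mp hx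
      exact (mem_UC _ _).mpr (Or.inl ⟨rfl, by omega⟩)
    · exact (mem_UC _ _).mpr (Or.inr ⟨hxs, hx⟩)
  · intro h
    have : s ∈ A c := by
      have hs : s ∈ C c := (mem_C s c).mpr (Or.inl ⟨rfl, rfl⟩)
      rw [← h] at hs
      exact hs
    exact hsAc this
  · intro j x hx
    rcases (mem_UC x j).mp hx with ⟨rfl, hcj⟩ | ⟨hxs, hxj⟩
    · exact U_mono (show i ≤ j by omega) hsB
    · exact hsub j hxj
  · -- C ≠ B since f C = f A + 1 < f B
    have hfC : f d C = f d A + 1 := by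
      unfold f
      have : ∀ j ∈ Finset.range d, (U C j).card
          = (U A j).card + (if j = c then 1 else 0) := by
        intro j _
        rw [hUC j]
        by_cases hjc : j = c
        · subst hjc
          rw [if_pos rfl, if_pos rfl, Finset.card_insert_of_notMem]
          intro h
          have := (mem_U hA).mp h
          omega
        · simp [hjc]
      rw [Finset.sum_congr rfl this, Finset.sum_add_distrib,
        Finset.sum_ite_eq' (Finset.range d) c (fun _ => 1)]
      simp [hcd]
    intro h
    subst h
    omega

end Aux14


/-- If `A < B` are neighbours in `Δ_d` and `ζA ≤ B` for a permutation `ζ`, then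
`ζA < B` and `ζA`, `B` are neighbours in `Δ_d`. -/
theorem stmt14 (d : ℕ) (A B : ℕ → Finset (Fin d))
    (hA : IsDissection d A) (hB : IsDissection d B)
    (hneighbours : (DomD A B ∧ A ≠ B) ∧
        ∀ C, IsDissection d C → ¬((DomD A C ∧ A ≠ C) ∧ (DomD C B ∧ C ≠ B)))
    (ζ : Equiv.Perm (Fin d)) (hle : DomD (actP ζ A) B) :
    (DomD (actP ζ A) B ∧ actP ζ A ≠ B) ∧
      ∀ C, IsDissection d C →
        ¬((DomD (actP ζ A) C ∧ actP ζ A ≠ C) ∧ (DomD C B ∧ C ≠ B)) := by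
  obtain ⟨⟨hAB, hABne⟩, hmax⟩ := hneighbours
  have hfAB : Aux14.f d A < Aux14.f d B := Aux14.f_lt hA hB hAB hABne
  have hζdiss : IsDissection d (actP ζ A) := Aux14.actP_diss hA ζ
  have hfζ : Aux14.f d (actP ζ A) = Aux14.f d A := Aux14.f_actP ζ
  constructor
  · refine ⟨hle, fun h => ?_⟩
    rw [h] at hfζ
    omega
  · rintro C hC ⟨⟨h1, h2⟩, h3, h4⟩
    have hf1 : Aux14.f d (actP ζ A) < Aux14.f d C := Aux14.f_lt hζdiss hC h1 h2
    have hf2 : Aux14.f d C < Aux14.f d B := Aux14.f_lt hC hB h3 h4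
    have : Aux14.f d A + 2 ≤ Aux14.f d B := by omega
    obtain ⟨C', hC'diss, hd1, hd2, hd3, hd4⟩ := Aux14.interp hA hB hAB this
    exact hmax C' hC'diss ⟨⟨hd1, hd2⟩, hd3, hd4⟩
end

section
/- Let W ≤ S_d and let χ be a one-dimensional (complex) character of W. For partitions λ ≤ μ of d in dominance order, the number of χ-orbits of W on tabloids of shape λ is at least the number of χ-orbits of W on tabloids of shape μ; i.e., n_{λ;χ} ≥ n_{μ;χ}. -/
/-- `lam` is a partition of `d` (weakly decreasing, supported on `0,…,d-1`,
summing to `d`). -/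
def IsPartitionOf (d : ℕ) (lam : ℕ → ℕ) : Prop :=
  (∀ k, lam (k + 1) ≤ lam k) ∧ (∀ k, d ≤ k → lam k = 0) ∧
    ∑ k ∈ Finset.range d, lam k = d

/-- The tabloids of shape `lam`: ordered dissections whose component sizes are `lam`. -/
def TabOfShape (d : ℕ) (lam : ℕ → ℕ) : Set (ℕ → Finset (Fin d)) :=
  {A | IsDissection d A ∧ ∀ k, (A k).card = lam k}

/-- The set of `χ`-orbits of `W` on tabloids of shape `lam`: those `W`-orbits such
that `χ` is identically `1` on the stabilizer of some (equivalently any) member. -/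
def chiOrbits (d : ℕ) (W : Subgroup (Equiv.Perm (Fin d))) (χ : W →* ℂˣ)
    (lam : ℕ → ℕ) : Set (Set (ℕ → Finset (Fin d))) :=
  {O | ∃ A ∈ TabOfShape d lam,
        (∀ σ : W, actP (σ : Equiv.Perm (Fin d)) A = A → χ σ = 1) ∧
        O = {B | ∃ σ : W, actP (σ : Equiv.Perm (Fin d)) A = B}}

namespace S18
open Finset
attribute [local instance] Classical.propDecidable
noncomputable section

variable {d : ℕ}

lemma mem_unique {A : ℕ → Finset (Fin d)} (hA : IsDissection d A) {s : Fin d} {i j : ℕ}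
    (hi : s ∈ A i) (hj : s ∈ A j) : i = j := by
  by_contra h
  exact Finset.disjoint_left.mp (hA.1 i j h) hi hj

lemma comp_lt_d {A : ℕ → Finset (Fin d)} (hA : IsDissection d A) {s : Fin d} {i : ℕ}
    (hi : s ∈ A i) : i < d := by
  by_contra h
  rw [hA.2.1 i (le_of_not_gt h)] at hi
  exact absurd hi (Finset.notMem_empty s)

lemma card_sum {A : ℕ → Finset (Fin d)} (hA : IsDissection d A) :
    ∑ k ∈ range d, (A k).card = d := by
  have hb : (range d).biUnion A = univ := by
    ext s
    simp only [mem_biUnion, mem_range, mem_univ, iff_true]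
    obtain ⟨i, hi⟩ := hA.2.2 s
    exact ⟨i, comp_lt_d hA hi, hi⟩
  have := Finset.card_biUnion (s := range d) (t := A)
    (fun i _ j _ hij => hA.1 i j hij)
  rw [hb] at this
  simpa using this.symm

/-- Move `s` from component `y` into component `x`. -/
def mv (x y : ℕ) (s : Fin d) (A : ℕ → Finset (Fin d)) : ℕ → Finset (Fin d) :=
  fun k => if k = x then insert s (A k) else if k = y then (A k).erase s else A k

lemma mv_x {x y : ℕ} {s : Fin d} {A : ℕ → Finset (Fin d)} : mv x y s A x = insert s (A x) := by
  simp [mv]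

lemma mv_y {x y : ℕ} (hxy : x ≠ y) {s : Fin d} {A : ℕ → Finset (Fin d)} :
    mv x y s A y = (A y).erase s := by
  simp [mv, Ne.symm hxy]

lemma mv_other {x y k : ℕ} (hx : k ≠ x) (hy : k ≠ y) {s : Fin d} {A : ℕ → Finset (Fin d)} :
    mv x y s A k = A k := by
  simp [mv, hx, hy]

lemma mv_cancel {x y : ℕ} (hxy : x ≠ y) {s : Fin d} {A : ℕ → Finset (Fin d)}
    (hs : s ∈ A y) (hsx : s ∉ A x) : mv y x s (mv x y s A) = A := by
  funext k
  by_cases hky : k = y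
  · rw [hky, show mv y x s (mv x y s A) y = insert s ((mv x y s A) y) from by simp [mv],
      mv_y hxy, Finset.insert_erase hs]
  · by_cases hkx : k = x
    · rw [hkx, show mv y x s (mv x y s A) x = ((mv x y s A) x).erase s from by simp [mv, hxy],
        mv_x, Finset.erase_insert hsx]
    · rw [mv_other hky hkx, mv_other hkx hky]

/-- Moving two distinct elements in opposite directions commutes. -/
lemma mv_swap_comm {x y : ℕ} (hxy : x ≠ y) {s t : Fin d} (hst : s ≠ t)
    {A : ℕ → Finset (Fin d)} :
    mv x y t (mv y x s A) = mv y x s (mv x y t A) := by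
  funext k
  by_cases hkx : k = x
  · rw [hkx, show mv x y t (mv y x s A) x = insert t ((mv y x s A) x) from by simp [mv],
      show mv y x s (mv x y t A) x = ((mv x y t A) x).erase s from by simp [mv, hxy],
      mv_y (Ne.symm hxy), mv_x, Finset.erase_insert_of_ne (Ne.symm hst)]
  · by_cases hky : k = y
    · rw [hky,
        show mv x y t (mv y x s A) y = ((mv y x s A) y).erase t from by simp [mv, Ne.symm hxy],
        show mv y x s (mv x y t A) y = insert s ((mv x y t A) y) from by simp [mv],
        show (mv y x s A) y = insert s (A y) from by simp [mv],
        mv_y hxy, Finset.erase_insert_of_ne hst]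
    · rw [mv_other hkx hky, mv_other hky hkx, mv_other hky hkx, mv_other hkx hky]

lemma mv_mem_tab {p q : ℕ → ℕ} {x y : ℕ} (hxy : x ≠ y) (hx : x < d) (hy : y < d)
    (hq1 : q x = p x + 1) (hq2 : q y + 1 = p y) (hq3 : ∀ k, k ≠ x → k ≠ y → q k = p k)
    {A : ℕ → Finset (Fin d)} (hA : A ∈ TabOfShape d p) {s : Fin d} (hs : s ∈ A y) :
    mv x y s A ∈ TabOfShape d q := by
  obtain ⟨hD, hc⟩ := hA
  have hsx : s ∉ A x := fun h => hxy (mem_unique hD h hs)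
  have hmem : ∀ (k : ℕ) (t : Fin d), t ∈ mv x y s A k →
      (t ∈ A k ∧ (k = y → t ≠ s)) ∨ (k = x ∧ t = s) := by
    intro k t ht
    by_cases hkx : k = x
    · rw [hkx, mv_x] at ht
      rcases Finset.mem_insert.mp ht with h | h
      · exact Or.inr ⟨hkx, h⟩
      · exact Or.inl ⟨hkx ▸ h, fun hky => absurd (hkx ▸ hky : x = y) hxy⟩
    · by_cases hky : k = y
      · rw [hky, mv_y hxy] at ht
        exact Or.inl ⟨hky ▸ Finset.mem_of_mem_erase ht, fun _ => Finset.ne_of_mem_erase ht⟩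
      · rw [mv_other hkx hky] at ht
        exact Or.inl ⟨ht, fun h => absurd h hky⟩
  refine ⟨⟨?_, ?_, ?_⟩, ?_⟩
  · intro i j hij
    rw [Finset.disjoint_left]
    intro t hti htj
    rcases hmem i t hti with ⟨hti', hi'⟩ | ⟨hix, hts⟩
    · rcases hmem j t htj with ⟨htj', _⟩ | ⟨hjx, hts⟩
      · exact hij (mem_unique hD hti' htj')
      · exact hi' (mem_unique hD hti' (hts ▸ hs)) hts
    · rcases hmem j t htj with ⟨htj', hj'⟩ | ⟨hjx, _⟩
      · exact hj' (mem_unique hD htj' (hts ▸ hs)) hts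
      · exact hij (hix.trans hjx.symm)
  · intro k hk
    have hkx : k ≠ x := fun h => absurd hx (by omega)
    have hky : k ≠ y := fun h => absurd hy (by omega)
    rw [mv_other hkx hky, hD.2.1 k hk]
  · intro t
    obtain ⟨i, hi⟩ := hD.2.2 t
    by_cases hiy : i = y
    · by_cases hts : t = s
      · exact ⟨x, by rw [mv_x]; exact hts ▸ Finset.mem_insert_self _ _⟩
      · exact ⟨y, by rw [mv_y hxy]; exact Finset.mem_erase.mpr ⟨hts, hiy ▸ hi⟩⟩
    · by_cases hix : i = x
      · exact ⟨x, by rw [mv_x]; exact Finset.mem_insert_of_mem (hix ▸ hi)⟩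
      · exact ⟨i, by rw [mv_other hix hiy]; exact hi⟩
  · intro k
    by_cases hkx : k = x
    · rw [hkx, mv_x, Finset.card_insert_of_notMem hsx, hc x, hq1]
    · by_cases hky : k = y
      · rw [hky, mv_y hxy, Finset.card_erase_of_mem hs, hc y]; omega
      · rw [mv_other hkx hky, hc k, hq3 k hkx hky]

lemma actP_mem_tab {p : ℕ → ℕ} (σ : Equiv.Perm (Fin d)) {A : ℕ → Finset (Fin d)}
    (hA : A ∈ TabOfShape d p) : actP σ A ∈ TabOfShape d p := by
  obtain ⟨⟨h1, h2, h3⟩, hc⟩ := hA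
  refine ⟨⟨?_, ?_, ?_⟩, ?_⟩
  · intro i j hij
    exact Finset.disjoint_image σ.injective |>.mpr (h1 i j hij)
  · intro k hk; rw [actP]; rw [h2 k hk]; simp
  · intro s
    obtain ⟨i, hi⟩ := h3 (σ.symm s)
    exact ⟨i, Finset.mem_image.mpr ⟨σ.symm s, hi, σ.apply_symm_apply s⟩⟩
  · intro k
    rw [actP]; rw [Finset.card_image_of_injective _ σ.injective, hc]

lemma actP_actP (σ τ : Equiv.Perm (Fin d)) (A : ℕ → Finset (Fin d)) :
    actP σ (actP τ A) = actP (σ * τ) A := by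
  funext k
  simp [actP, Finset.image_image, Function.comp]

lemma actP_one (A : ℕ → Finset (Fin d)) : actP (1 : Equiv.Perm (Fin d)) A = A := by
  funext k; simp [actP]

lemma actP_mv (σ : Equiv.Perm (Fin d)) (x y : ℕ) (s : Fin d) (A : ℕ → Finset (Fin d)) :
    actP σ (mv x y s A) = mv x y (σ s) (actP σ A) := by
  funext k
  simp only [actP, mv]
  split
  · rw [Finset.image_insert]
  · split
    · rw [Finset.image_erase σ.injective]
    · rfl

lemma tab_finite (p : ℕ → ℕ) : (TabOfShape d p).Finite := by
  have : Function.Injective (fun A : TabOfShape d p => (fun i : Fin d => A.1 i)) := by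
    intro A B h
    apply Subtype.ext
    funext k
    rcases lt_or_ge k d with hk | hk
    · exact congrFun h ⟨k, hk⟩
    · rw [A.2.1.2.1 k hk, B.2.1.2.1 k hk]
  rw [← Set.finite_coe_iff]
  exact Finite.of_injective _ this

lemma actP_mem_tab_iff {p : ℕ → ℕ} (σ : Equiv.Perm (Fin d)) {A : ℕ → Finset (Fin d)} :
    actP σ A ∈ TabOfShape d p ↔ A ∈ TabOfShape d p := by
  constructor
  · intro h
    have := actP_mem_tab σ⁻¹ h
    rwa [actP_actP, inv_mul_cancel, actP_one] at this
  · exact actP_mem_tab σ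


section Espace

variable (W : Subgroup (Equiv.Perm (Fin d))) (χ : W →* ℂˣ)

/-- Orbit of `A` under `W`. -/
def orbS (A : ℕ → Finset (Fin d)) : Set (ℕ → Finset (Fin d)) :=
  {B | ∃ σ : W, actP (σ : Equiv.Perm (Fin d)) A = B}

lemma orbS_actP (σ : W) (A : ℕ → Finset (Fin d)) :
    orbS W (actP (σ : Equiv.Perm (Fin d)) A) = orbS W A := by
  ext B
  constructor
  · rintro ⟨τ, rfl⟩
    exact ⟨τ * σ, by
      rw [show ((τ * σ : W) : Equiv.Perm (Fin d))
        = (τ : Equiv.Perm (Fin d)) * (σ : Equiv.Perm (Fin d)) from rfl, ← actP_actP]⟩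
  · rintro ⟨τ, rfl⟩
    refine ⟨τ * σ⁻¹, ?_⟩
    rw [show ((τ * σ⁻¹ : W) : Equiv.Perm (Fin d))
      = (τ : Equiv.Perm (Fin d)) * ((σ : W) : Equiv.Perm (Fin d))⁻¹ from rfl,
      actP_actP, mul_assoc, inv_mul_cancel, mul_one]

lemma chiOrbits_finite (p : ℕ → ℕ) : (chiOrbits d W χ p).Finite := by
  apply Set.Finite.subset (Set.Finite.image (orbS W) (tab_finite p))
  rintro O ⟨A, hA, _, rfl⟩
  exact ⟨A, hA, rfl⟩

/-- The space of `χ`-equivariant functions supported on tabloids of shape `p`. -/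
def Efun (p : ℕ → ℕ) : Submodule ℂ ((ℕ → Finset (Fin d)) → ℂ) where
  carrier := {f | (∀ B, B ∉ TabOfShape d p → f B = 0) ∧
    ∀ (σ : W) (B : ℕ → Finset (Fin d)),
      f (actP (σ : Equiv.Perm (Fin d)) B) = (χ σ : ℂ) * f B}
  add_mem' := by
    rintro f g ⟨hf1, hf2⟩ ⟨hg1, hg2⟩
    refine ⟨fun B hB => ?_, fun σ B => ?_⟩
    · simp [Pi.add_apply, hf1 B hB, hg1 B hB]
    · simp [Pi.add_apply, hf2 σ B, hg2 σ B, mul_add]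
  zero_mem' := by
    refine ⟨fun B _ => rfl, fun σ B => by simp⟩
  smul_mem' := by
    rintro c f ⟨hf1, hf2⟩
    refine ⟨fun B hB => ?_, fun σ B => ?_⟩
    · simp [hf1 B hB]
    · simp [hf2 σ B]; ring

lemma mem_Efun {p : ℕ → ℕ} {f : (ℕ → Finset (Fin d)) → ℂ} :
    f ∈ Efun W χ p ↔ (∀ B, B ∉ TabOfShape d p → f B = 0) ∧
      ∀ (σ : W) (B : ℕ → Finset (Fin d)),
        f (actP (σ : Equiv.Perm (Fin d)) B) = (χ σ : ℂ) * f B := Iff.rfl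

variable {p : ℕ → ℕ}

/-- Chosen representative of a `χ`-orbit. -/
def rep (O : ↥(chiOrbits d W χ p)) : ℕ → Finset (Fin d) :=
  O.2.choose

lemma rep_tab (O : ↥(chiOrbits d W χ p)) : rep W χ O ∈ TabOfShape d p :=
  O.2.choose_spec.1

lemma rep_stab (O : ↥(chiOrbits d W χ p)) :
    ∀ σ : W, actP (σ : Equiv.Perm (Fin d)) (rep W χ O) = rep W χ O → χ σ = 1 :=
  O.2.choose_spec.2.1

lemma rep_orb (O : ↥(chiOrbits d W χ p)) : (O : Set (ℕ → Finset (Fin d))) = orbS W (rep W χ O) :=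
  O.2.choose_spec.2.2

lemma chiVal (O : ↥(chiOrbits d W χ p)) {σ τ : W}
    (h : actP (σ : Equiv.Perm (Fin d)) (rep W χ O) = actP (τ : Equiv.Perm (Fin d)) (rep W χ O)) :
    χ σ = χ τ := by
  have h2 : actP ((τ⁻¹ * σ : W) : Equiv.Perm (Fin d)) (rep W χ O) = rep W χ O := by
    rw [show ((τ⁻¹ * σ : W) : Equiv.Perm (Fin d))
        = ((τ : W) : Equiv.Perm (Fin d))⁻¹ * ((σ : W) : Equiv.Perm (Fin d)) from rfl,
      ← actP_actP, h, actP_actP, inv_mul_cancel, actP_one]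
  have := rep_stab W χ O _ h2
  rw [map_mul, map_inv] at this
  exact (inv_mul_eq_one.mp this).symm

/-- Basis function attached to a `χ`-orbit. -/
def fO (O : ↥(chiOrbits d W χ p)) : (ℕ → Finset (Fin d)) → ℂ :=
  fun B => if h : ∃ σ : W, actP (σ : Equiv.Perm (Fin d)) (rep W χ O) = B
    then ((χ h.choose : ℂˣ) : ℂ) else 0

lemma fO_mem (O : ↥(chiOrbits d W χ p)) : fO W χ O ∈ Efun W χ p := by
  constructor
  · intro B hB
    rw [fO, dif_neg]
    rintro ⟨σ, rfl⟩
    exact hB (actP_mem_tab _ (rep_tab W χ O))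
  · intro τ B
    by_cases h : ∃ σ : W, actP (σ : Equiv.Perm (Fin d)) (rep W χ O) = B
    · have h' : ∃ σ : W, actP (σ : Equiv.Perm (Fin d)) (rep W χ O)
          = actP (τ : Equiv.Perm (Fin d)) B := by
        refine ⟨τ * h.choose, ?_⟩
        rw [show ((τ * h.choose : W) : Equiv.Perm (Fin d))
          = (τ : Equiv.Perm (Fin d)) * (h.choose : Equiv.Perm (Fin d)) from rfl,
          ← actP_actP, h.choose_spec]
      simp only [fO]
      rw [dif_pos h', dif_pos h]
      have : χ h'.choose = χ (τ * h.choose) := by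
        apply chiVal W χ O
        rw [h'.choose_spec,
          show ((τ * h.choose : W) : Equiv.Perm (Fin d))
            = (τ : Equiv.Perm (Fin d)) * (h.choose : Equiv.Perm (Fin d)) from rfl,
          ← actP_actP, h.choose_spec]
      rw [this, map_mul]
      push_cast
      ring
    · have h' : ¬ ∃ σ : W, actP (σ : Equiv.Perm (Fin d)) (rep W χ O)
          = actP (τ : Equiv.Perm (Fin d)) B := by
        rintro ⟨σ, hσ⟩
        refine h ⟨τ⁻¹ * σ, ?_⟩
        rw [show ((τ⁻¹ * σ : W) : Equiv.Perm (Fin d))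
          = ((τ : W) : Equiv.Perm (Fin d))⁻¹ * (σ : Equiv.Perm (Fin d)) from rfl,
          ← actP_actP, hσ, actP_actP, inv_mul_cancel, actP_one]
      rw [fO, dif_neg h', fO, dif_neg h, mul_zero]

lemma fO_rep (O O' : ↥(chiOrbits d W χ p)) :
    fO W χ O (rep W χ O') = if O = O' then 1 else 0 := by
  by_cases hOO : O = O'
  · rw [if_pos hOO, ← hOO, fO]
    have h : ∃ σ : W, actP (σ : Equiv.Perm (Fin d)) (rep W χ O) = rep W χ O :=
      ⟨1, by rw [show ((1 : W) : Equiv.Perm (Fin d)) = 1 from rfl, actP_one]⟩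
    rw [dif_pos h]
    have := rep_stab W χ O _ h.choose_spec
    rw [this]; rfl
  · rw [if_neg hOO, fO, dif_neg]
    rintro ⟨σ, hσ⟩
    apply hOO
    apply Subtype.ext
    rw [rep_orb W χ O, rep_orb W χ O', ← hσ, orbS_actP]

lemma Efun_eval_zero {f : (ℕ → Finset (Fin d)) → ℂ} (hf : f ∈ Efun W χ p)
    (h0 : ∀ O : ↥(chiOrbits d W χ p), f (rep W χ O) = 0) : f = 0 := by
  funext B
  by_cases hB : B ∈ TabOfShape d p
  · by_cases hst : ∀ σ : W, actP (σ : Equiv.Perm (Fin d)) B = B → χ σ = 1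
    · set O : ↥(chiOrbits d W χ p) := ⟨{C | ∃ σ : W, actP (σ : Equiv.Perm (Fin d)) B = C},
        ⟨B, hB, hst, rfl⟩⟩ with hO
      have hrep : rep W χ O ∈ (O : Set (ℕ → Finset (Fin d))) := by
        rw [rep_orb W χ O]
        exact ⟨1, by rw [show ((1 : W) : Equiv.Perm (Fin d)) = 1 from rfl, actP_one]⟩
      obtain ⟨σ, hσ⟩ : ∃ σ : W, actP (σ : Equiv.Perm (Fin d)) B = rep W χ O := hrep
      have := hf.2 σ B
      rw [hσ, h0 O] at this
      exact (mul_eq_zero.mp this.symm).resolve_left (Units.ne_zero _)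
    · push_neg at hst
      obtain ⟨σ, hσ1, hσ2⟩ := hst
      have := hf.2 σ B
      rw [hσ1] at this
      have h' : (1 - ((χ σ : ℂˣ) : ℂ)) * f B = 0 := by linear_combination this
      rcases mul_eq_zero.mp h' with h | h
      · exfalso
        apply hσ2
        apply Units.val_eq_one.mp
        linear_combination -h
      · exact h
  · exact hf.1 B hB

lemma finrank_Efun (p : ℕ → ℕ) :
    Module.finrank ℂ (Efun W χ p) = Nat.card ↥(chiOrbits d W χ p) := by
  haveI : Finite ↥(chiOrbits d W χ p) := (chiOrbits_finite W χ p).to_subtype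
  haveI : Fintype ↥(chiOrbits d W χ p) := Fintype.ofFinite _
  let ev : Efun W χ p →ₗ[ℂ] (↥(chiOrbits d W χ p) → ℂ) :=
    { toFun := fun f => fun O => f.1 (rep W χ O)
      map_add' := fun f g => rfl
      map_smul' := fun c f => rfl }
  have hinj : Function.Injective ev := by
    intro f g h
    apply Subtype.ext
    have : (f : (ℕ → Finset (Fin d)) → ℂ) - g ∈ Efun W χ p := sub_mem f.2 g.2
    have h0 : ∀ O : ↥(chiOrbits d W χ p), ((f : (ℕ → Finset (Fin d)) → ℂ) - g) (rep W χ O) = 0 := by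
      intro O
      have := congrFun h O
      simpa [ev, sub_eq_zero] using this
    have := Efun_eval_zero W χ this h0
    rwa [sub_eq_zero] at this
  have hsurj : Function.Surjective ev := by
    intro g
    set f : (ℕ → Finset (Fin d)) → ℂ :=
      fun B => ∑ O : ↥(chiOrbits d W χ p), g O * fO W χ O B with hfdef
    have hmem : f ∈ Efun W χ p := by
      constructor
      · intro B hB
        rw [hfdef]
        apply Finset.sum_eq_zero
        intro O _
        rw [(fO_mem W χ O).1 B hB, mul_zero]
      · intro σ B
        rw [hfdef]
        simp only
        rw [Finset.mul_sum]
        apply Finset.sum_congr rfl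
        intro O _
        rw [(fO_mem W χ O).2 σ B]
        ring
    refine ⟨⟨f, hmem⟩, ?_⟩
    funext O'
    show f (rep W χ O') = g O'
    rw [hfdef]
    simp only
    simp only [fO_rep]
    simp [Finset.sum_ite_eq']
  have := LinearEquiv.finrank_eq (LinearEquiv.ofBijective ev ⟨hinj, hsurj⟩)
  rw [this, Module.finrank_pi, Nat.card_eq_fintype_card]

end Espace


section Sums

/-- The finset of tabloids of shape `p`. -/
def Tset (p : ℕ → ℕ) : Finset (ℕ → Finset (Fin d)) := (tab_finite (d := d) p).toFinset

lemma mem_Tset {p : ℕ → ℕ} {A : ℕ → Finset (Fin d)} : A ∈ Tset p ↔ A ∈ TabOfShape d p :=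
  Set.Finite.mem_toFinset _

lemma guard_sum {S : Finset (Fin d)} (h : Fin d → ℂ) :
    ∑ s ∈ S, h s = ∑ s : Fin d, if s ∈ S then h s else 0 := by
  rw [Finset.sum_ite_mem, Finset.univ_inter]

lemma double_guard (T : Finset (ℕ → Finset (Fin d))) (S1 : (ℕ → Finset (Fin d)) → Finset (Fin d))
    (H : (ℕ → Finset (Fin d)) → Fin d → ℂ) :
    ∑ A ∈ T, ∑ s ∈ S1 A, H A s
      = ∑ s : Fin d, ∑ A ∈ T.filter (fun A => s ∈ S1 A), H A s := by
  calc ∑ A ∈ T, ∑ s ∈ S1 A, H A s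
      = ∑ A ∈ T, ∑ s : Fin d, if s ∈ S1 A then H A s else 0 :=
        Finset.sum_congr rfl fun A _ => guard_sum _
    _ = ∑ s : Fin d, ∑ A ∈ T, if s ∈ S1 A then H A s else 0 := Finset.sum_comm
    _ = ∑ s : Fin d, ∑ A ∈ T.filter (fun A => s ∈ S1 A), H A s :=
        Finset.sum_congr rfl fun s _ => (Finset.sum_filter _ _).symm

lemma triple_guard (T : Finset (ℕ → Finset (Fin d))) (S1 : (ℕ → Finset (Fin d)) → Finset (Fin d))
    (S2 : (ℕ → Finset (Fin d)) → Fin d → Finset (Fin d))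
    (H : (ℕ → Finset (Fin d)) → Fin d → Fin d → ℂ) :
    ∑ A ∈ T, ∑ s ∈ S1 A, ∑ t ∈ S2 A s, H A s t
      = ∑ s : Fin d, ∑ t : Fin d,
          ∑ A ∈ T.filter (fun A => s ∈ S1 A ∧ t ∈ S2 A s), H A s t := by
  calc ∑ A ∈ T, ∑ s ∈ S1 A, ∑ t ∈ S2 A s, H A s t
      = ∑ A ∈ T, ∑ s : Fin d, ∑ t : Fin d,
          if s ∈ S1 A ∧ t ∈ S2 A s then H A s t else 0 := by
        refine Finset.sum_congr rfl fun A _ => ?_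
        rw [guard_sum]
        refine Finset.sum_congr rfl fun s _ => ?_
        by_cases hs : s ∈ S1 A
        · rw [if_pos hs, guard_sum]
          refine Finset.sum_congr rfl fun t _ => ?_
          by_cases ht : t ∈ S2 A s
          · rw [if_pos ht, if_pos ⟨hs, ht⟩]
          · rw [if_neg ht, if_neg (fun h => ht h.2)]
        · rw [if_neg hs, eq_comm]
          exact Finset.sum_eq_zero fun t _ => if_neg (fun h => hs h.1)
    _ = ∑ s : Fin d, ∑ A ∈ T, ∑ t : Fin d,
          if s ∈ S1 A ∧ t ∈ S2 A s then H A s t else 0 := Finset.sum_comm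
    _ = ∑ s : Fin d, ∑ t : Fin d, ∑ A ∈ T,
          if s ∈ S1 A ∧ t ∈ S2 A s then H A s t else 0 :=
        Finset.sum_congr rfl fun s _ => Finset.sum_comm
    _ = ∑ s : Fin d, ∑ t : Fin d,
          ∑ A ∈ T.filter (fun A => s ∈ S1 A ∧ t ∈ S2 A s), H A s t :=
        Finset.sum_congr rfl fun s _ => Finset.sum_congr rfl fun t _ =>
          (Finset.sum_filter _ _).symm

variable {p q : ℕ → ℕ} {x y : ℕ}

lemma notMem_other {A : ℕ → Finset (Fin d)} (hA : A ∈ TabOfShape d p) {s : Fin d}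
    (hs : s ∈ A y) (hxy : x ≠ y) : s ∉ A x :=
  fun h => hxy (mem_unique hA.1 h hs)

lemma sum_mv_diag (hxy : x ≠ y) (hx : x < d) (hy : y < d)
    (hq1 : q x = p x + 1) (hq2 : q y + 1 = p y) (hq3 : ∀ k, k ≠ x → k ≠ y → q k = p k)
    (F : (ℕ → Finset (Fin d)) → ℂ) :
    ∑ A ∈ Tset p, ∑ s ∈ (A y), F (mv x y s A) = ∑ B ∈ Tset q, ∑ s ∈ (B x), F B := by
  have L : ∀ s : Fin d, ∑ A ∈ (Tset p).filter (fun A => s ∈ A y), F (mv x y s A)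
      = ∑ B ∈ (Tset q).filter (fun B => s ∈ B x), F B := by
    intro s
    refine Finset.sum_nbij' (fun A => mv x y s A) (fun B => mv y x s B) ?_ ?_ ?_ ?_ ?_
    · intro A hA
      obtain ⟨hT, hs⟩ := Finset.mem_filter.mp hA
      refine Finset.mem_filter.mpr ⟨mem_Tset.mpr
        (mv_mem_tab hxy hx hy hq1 hq2 hq3 (mem_Tset.mp hT) hs), ?_⟩
      show s ∈ mv _ _ s _ _
      rw [mv_x]; exact Finset.mem_insert_self _ _
    · intro B hB
      obtain ⟨hT, hs⟩ := Finset.mem_filter.mp hB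
      refine Finset.mem_filter.mpr ⟨mem_Tset.mpr
        (mv_mem_tab (Ne.symm hxy) hy hx hq2.symm hq1.symm
          (fun k h1 h2 => (hq3 k h2 h1).symm) (mem_Tset.mp hT) hs), ?_⟩
      show s ∈ mv _ _ s _ _
      rw [mv_x]; exact Finset.mem_insert_self _ _
    · intro A hA
      obtain ⟨hT, hs⟩ := Finset.mem_filter.mp hA
      exact mv_cancel hxy hs (notMem_other (mem_Tset.mp hT) hs hxy)
    · intro B hB
      obtain ⟨hT, hs⟩ := Finset.mem_filter.mp hB
      exact mv_cancel (Ne.symm hxy) hs (notMem_other (mem_Tset.mp hT) hs (Ne.symm hxy))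
    · intro A _; rfl
  calc ∑ A ∈ Tset p, ∑ s ∈ (A y), F (mv x y s A)
      = ∑ s : Fin d, ∑ A ∈ (Tset p).filter (fun A => s ∈ A y), F (mv x y s A) :=
        double_guard _ _ _
    _ = ∑ s : Fin d, ∑ B ∈ (Tset q).filter (fun B => s ∈ B x), F B :=
        Finset.sum_congr rfl fun s _ => L s
    _ = ∑ B ∈ Tset q, ∑ s ∈ (B x), F B := (double_guard _ _ _).symm

lemma sum_mv_off (hxy : x ≠ y) (hx : x < d) (hy : y < d)
    (hq1 : q x = p x + 1) (hq2 : q y + 1 = p y) (hq3 : ∀ k, k ≠ x → k ≠ y → q k = p k)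
    (G2 : (ℕ → Finset (Fin d)) → (ℕ → Finset (Fin d)) → ℂ) :
    ∑ A ∈ Tset p, ∑ s ∈ (A y), ∑ t ∈ (A y).erase s, G2 (mv x y s A) (mv x y t A)
      = ∑ B ∈ Tset q, ∑ s ∈ (B x), ∑ t ∈ (B y), G2 B (mv x y t (mv y x s B)) := by
  have L : ∀ s t : Fin d,
      ∑ A ∈ (Tset p).filter (fun A => s ∈ A y ∧ t ∈ (A y).erase s),
        G2 (mv x y s A) (mv x y t A)
      = ∑ B ∈ (Tset q).filter (fun B => s ∈ B x ∧ t ∈ B y),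
          G2 B (mv x y t (mv y x s B)) := by
    intro s t
    refine Finset.sum_nbij' (fun A => mv x y s A) (fun B => mv y x s B) ?_ ?_ ?_ ?_ ?_
    · intro A hA
      obtain ⟨hT, hs, ht⟩ := Finset.mem_filter.mp hA
      refine Finset.mem_filter.mpr ⟨mem_Tset.mpr
        (mv_mem_tab hxy hx hy hq1 hq2 hq3 (mem_Tset.mp hT) hs), ?_, ?_⟩
      · show s ∈ mv _ _ s _ _
        rw [mv_x]; exact Finset.mem_insert_self _ _
      · show t ∈ mv x y s A y
        rw [mv_y hxy]; exact ht
    · intro B hB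
      obtain ⟨hT, hs, ht⟩ := Finset.mem_filter.mp hB
      have hsy : s ∉ B y := notMem_other (mem_Tset.mp hT) hs (Ne.symm hxy)
      refine Finset.mem_filter.mpr ⟨mem_Tset.mpr
        (mv_mem_tab (Ne.symm hxy) hy hx hq2.symm hq1.symm
          (fun k h1 h2 => (hq3 k h2 h1).symm) (mem_Tset.mp hT) hs), ?_, ?_⟩
      · show s ∈ mv _ _ s _ _
        rw [mv_x]; exact Finset.mem_insert_self _ _
      · show t ∈ (mv y x s B y).erase s
        rw [mv_x, Finset.erase_insert hsy]; exact ht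
    · intro A hA
      obtain ⟨hT, hs, ht⟩ := Finset.mem_filter.mp hA
      exact mv_cancel hxy hs (notMem_other (mem_Tset.mp hT) hs hxy)
    · intro B hB
      obtain ⟨hT, hs, ht⟩ := Finset.mem_filter.mp hB
      exact mv_cancel (Ne.symm hxy) hs (notMem_other (mem_Tset.mp hT) hs (Ne.symm hxy))
    · intro A hA
      obtain ⟨hT, hs, ht⟩ := Finset.mem_filter.mp hA
      rw [mv_cancel hxy hs (notMem_other (mem_Tset.mp hT) hs hxy)]
  calc ∑ A ∈ Tset p, ∑ s ∈ (A y), ∑ t ∈ (A y).erase s, G2 (mv x y s A) (mv x y t A)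
      = ∑ s : Fin d, ∑ t : Fin d,
          ∑ A ∈ (Tset p).filter (fun A => s ∈ A y ∧ t ∈ (A y).erase s),
            G2 (mv x y s A) (mv x y t A) := triple_guard _ _ _ _
    _ = ∑ s : Fin d, ∑ t : Fin d,
          ∑ B ∈ (Tset q).filter (fun B => s ∈ B x ∧ t ∈ B y),
            G2 B (mv x y t (mv y x s B)) :=
        Finset.sum_congr rfl fun s _ => Finset.sum_congr rfl fun t _ => L s t
    _ = ∑ B ∈ Tset q, ∑ s ∈ (B x), ∑ t ∈ (B y), G2 B (mv x y t (mv y x s B)) :=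
        (triple_guard _ _ _ _).symm

end Sums


section Step

variable (W : Subgroup (Equiv.Perm (Fin d))) (χ : W →* ℂˣ)

lemma Efun_fd (p : ℕ → ℕ) : FiniteDimensional ℂ ↥(Efun W χ p) := by
  haveI : Finite ↥(TabOfShape d p) := (tab_finite p).to_subtype
  haveI : Fintype ↥(TabOfShape d p) := Fintype.ofFinite _
  refine FiniteDimensional.of_injective (V₂ := ↥(TabOfShape d p) → ℂ)
    { toFun := fun f => fun A => f.1 A.1
      map_add' := fun f g => rfl
      map_smul' := fun c f => rfl } ?_
  intro f g h
  apply Subtype.ext; funext B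
  by_cases hB : B ∈ TabOfShape d p
  · exact congrFun h ⟨B, hB⟩
  · rw [f.2.1 B hB, g.2.1 B hB]

/-- The raising operator as a linear map on all functions. -/
def Phi0 (ν : ℕ → ℕ) (a b : ℕ) :
    ((ℕ → Finset (Fin d)) → ℂ) →ₗ[ℂ] ((ℕ → Finset (Fin d)) → ℂ) where
  toFun f := fun A => if A ∈ TabOfShape d ν then ∑ s ∈ A b, f (mv a b s A) else 0
  map_add' f g := by
    funext A
    by_cases h : A ∈ TabOfShape d ν
    · simp [h, Finset.sum_add_distrib]
    · simp [h]
  map_smul' c f := by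
    funext A
    by_cases h : A ∈ TabOfShape d ν
    · simp [h, Finset.mul_sum]
    · simp [h]

lemma Phi0_apply_tab {ν : ℕ → ℕ} {a b : ℕ} {f : (ℕ → Finset (Fin d)) → ℂ}
    {A : ℕ → Finset (Fin d)} (hA : A ∈ TabOfShape d ν) :
    Phi0 ν a b f A = ∑ s ∈ A b, f (mv a b s A) := by
  simp only [Phi0, LinearMap.coe_mk, AddHom.coe_mk, if_pos hA]

lemma Phi0_mem {p ν : ℕ → ℕ} {a b : ℕ} {f : (ℕ → Finset (Fin d)) → ℂ}
    (hf : f ∈ Efun W χ p) : Phi0 ν a b f ∈ Efun W χ ν := by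
  constructor
  · intro B hB
    simp only [Phi0, LinearMap.coe_mk, AddHom.coe_mk, if_neg hB]
  · intro σ B
    by_cases hB : B ∈ TabOfShape d ν
    · have hB' : actP (σ : Equiv.Perm (Fin d)) B ∈ TabOfShape d ν := actP_mem_tab _ hB
      rw [Phi0_apply_tab hB', Phi0_apply_tab hB, Finset.mul_sum]
      have himg : (actP (σ : Equiv.Perm (Fin d)) B) b
          = (B b).image (σ : Equiv.Perm (Fin d)) := rfl
      rw [himg, Finset.sum_image (fun u _ v _ h =>
        (σ : Equiv.Perm (Fin d)).injective h)]
      refine Finset.sum_congr rfl fun t ht => ?_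
      rw [← actP_mv, hf.2 σ (mv a b t B)]
    · have hB' : actP (σ : Equiv.Perm (Fin d)) B ∉ TabOfShape d ν := by
        rw [actP_mem_tab_iff]; exact hB
      simp only [Phi0, LinearMap.coe_mk, AddHom.coe_mk, if_neg hB, if_neg hB', mul_zero]

lemma mul_conj_expand (I : Finset (Fin d)) (u : Fin d → ℂ) :
    (∑ s ∈ I, u s) * (starRingEnd ℂ) (∑ t ∈ I, u t)
      = (∑ s ∈ I, u s * (starRingEnd ℂ) (u s))
        + ∑ s ∈ I, ∑ t ∈ I.erase s, u s * (starRingEnd ℂ) (u t) := by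
  rw [map_sum, Finset.sum_mul_sum, ← Finset.sum_add_distrib]
  exact Finset.sum_congr rfl fun s hs =>
    (Finset.add_sum_erase _ (fun t => u s * (starRingEnd ℂ) (u t)) hs).symm

lemma key_inj {p ν : ℕ → ℕ} {a b : ℕ} (hab : a ≠ b) (ha : a < d) (hb : b < d)
    (h1 : p a = ν a + 1) (h2 : ν b = p b + 1)
    (h3 : ∀ k, k ≠ a → k ≠ b → ν k = p k) (hlt : p b < p a)
    {f : (ℕ → Finset (Fin d)) → ℂ} (hf : f ∈ Efun W χ p)
    (h0 : ∀ A ∈ TabOfShape d ν, ∑ s ∈ A b, f (mv a b s A) = 0) : f = 0 := by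
  classical
  set cj := starRingEnd ℂ with hcj
  set T : ℂ := ∑ B ∈ Tset p, f B * cj (f B) with hT
  set S : ℂ := ∑ B ∈ Tset p, ∑ s ∈ B a, ∑ t ∈ B b,
    f B * cj (f (mv a b t (mv b a s B))) with hS
  have hq3' : ∀ k, k ≠ a → k ≠ b → p k = ν k := fun k u v => (h3 k u v).symm
  -- Claim 1
  have claim1 : (0 : ℂ) = (p a : ℂ) * T + S := by
    have lhs0 : ∑ A ∈ Tset ν,
        (∑ s ∈ A b, f (mv a b s A)) * cj (∑ t ∈ A b, f (mv a b t A)) = 0 :=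
      Finset.sum_eq_zero fun A hA => by
        rw [h0 A (mem_Tset.mp hA), zero_mul]
    rw [← lhs0]
    have expand : ∀ A ∈ Tset ν,
        (∑ s ∈ A b, f (mv a b s A)) * cj (∑ t ∈ A b, f (mv a b t A))
          = (∑ s ∈ A b, f (mv a b s A) * cj (f (mv a b s A)))
            + ∑ s ∈ A b, ∑ t ∈ (A b).erase s, f (mv a b s A) * cj (f (mv a b t A)) :=
      fun A _ => mul_conj_expand _ _
    rw [Finset.sum_congr rfl expand, Finset.sum_add_distrib]
    congr 1
    · rw [sum_mv_diag (p := ν) (q := p) hab ha hb h1 h2.symm hq3'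
        (fun B => f B * cj (f B)), Finset.mul_sum]
      refine Finset.sum_congr rfl fun B hB => ?_
      rw [Finset.sum_const, (mem_Tset.mp hB).2 a, nsmul_eq_mul]
    · exact sum_mv_off (p := ν) (q := p) hab ha hb h1 h2.symm hq3'
        (fun B₁ B₂ => f B₁ * cj (f B₂))
  set Tr : ℝ := ∑ B ∈ Tset p, Complex.normSq (f B) with hTrdef
  have hTreq : T = (Tr : ℝ) := by
    rw [hT, hTrdef]
    push_cast
    exact Finset.sum_congr rfl fun B _ => (Complex.mul_conj (f B))
  have hTr0 : 0 ≤ Tr := Finset.sum_nonneg fun B _ => Complex.normSq_nonneg _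
  have hTrz : Tr = 0 := by
    by_cases hpb : p b = 0
    · have hSz : S = 0 := by
        rw [hS]
        refine Finset.sum_eq_zero fun B hB => ?_
        have hBb : B b = ∅ := Finset.card_eq_zero.mp (by rw [(mem_Tset.mp hB).2 b, hpb])
        exact Finset.sum_eq_zero fun s _ => by rw [hBb]; simp
      have hmain : (p a : ℂ) * T = 0 := by
        have := claim1
        rw [hSz, add_zero] at this
        exact this.symm
      have hpa : (p a : ℂ) ≠ 0 := Nat.cast_ne_zero.mpr (by omega)
      have hTz : T = 0 := by
        rcases mul_eq_zero.mp hmain with h | h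
        · exact absurd h hpa
        · exact h
      rw [hTreq] at hTz
      exact_mod_cast hTz
    · -- p b ≥ 1 : use the lowering operator
      set ν' : ℕ → ℕ := fun k => if k = b then p b - 1 else if k = a then p a + 1 else p k
        with hν'
      have hq1₂ : p b = ν' b + 1 := by simp only [hν', if_pos rfl]; omega
      have hq2₂ : p a + 1 = ν' a := by
        simp [hν', hab]
      have hq3₂ : ∀ k, k ≠ b → k ≠ a → p k = ν' k := fun k u v => by
        simp only [hν', if_neg u, if_neg v]
      set P : ℂ := ∑ C ∈ Tset ν',
        (∑ s ∈ C a, f (mv b a s C)) * cj (∑ t ∈ C a, f (mv b a t C)) with hP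
      have claim2 : P = (p b : ℂ) * T + S := by
        rw [hP]
        have expand : ∀ C ∈ Tset ν',
            (∑ s ∈ C a, f (mv b a s C)) * cj (∑ t ∈ C a, f (mv b a t C))
              = (∑ s ∈ C a, f (mv b a s C) * cj (f (mv b a s C)))
                + ∑ s ∈ C a, ∑ t ∈ (C a).erase s, f (mv b a s C) * cj (f (mv b a t C)) :=
          fun C _ => mul_conj_expand _ _
        rw [Finset.sum_congr rfl expand, Finset.sum_add_distrib]
        congr 1
        · rw [sum_mv_diag (p := ν') (q := p) (x := b) (y := a) (Ne.symm hab) hb ha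
            hq1₂ hq2₂ hq3₂ (fun B => f B * cj (f B)), Finset.mul_sum]
          refine Finset.sum_congr rfl fun B hB => ?_
          rw [Finset.sum_const, (mem_Tset.mp hB).2 b, nsmul_eq_mul]
        · rw [sum_mv_off (p := ν') (q := p) (x := b) (y := a) (Ne.symm hab) hb ha
            hq1₂ hq2₂ hq3₂ (fun B₁ B₂ => f B₁ * cj (f B₂)), hS]
          refine Finset.sum_congr rfl fun B hB => ?_
          rw [Finset.sum_comm]
          refine Finset.sum_congr rfl fun s hs => Finset.sum_congr rfl fun t ht => ?_
          have hst : t ≠ s := fun h =>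
            (Finset.disjoint_left.mp ((mem_Tset.mp hB).1.1 a b hab) hs) (h ▸ ht)
          rw [mv_swap_comm hab (Ne.symm hst)]
      set Pr : ℝ := ∑ C ∈ Tset ν', Complex.normSq (∑ s ∈ C a, f (mv b a s C)) with hPrdef
      have hPreq : P = (Pr : ℝ) := by
        rw [hP, hPrdef]
        push_cast
        exact Finset.sum_congr rfl fun C _ => (Complex.mul_conj _)
      have hPr0 : 0 ≤ Pr := Finset.sum_nonneg fun C _ => Complex.normSq_nonneg _
      -- combine : P = pb*T + S and 0 = pa*T + S give P + pa*T = pb*T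
      have hcomb : P + (p a : ℂ) * T = (p b : ℂ) * T := by
        have := claim1
        rw [claim2]
        linear_combination -this
      rw [hPreq, hTreq] at hcomb
      have hreal : Pr + (p a : ℝ) * Tr = (p b : ℝ) * Tr := by
        exact_mod_cast hcomb
      have hba : (p b : ℝ) + 1 ≤ (p a : ℝ) := by exact_mod_cast hlt
      nlinarith [hPr0, hTr0, hreal, hba]
  -- conclude f = 0
  funext B
  by_cases hB : B ∈ TabOfShape d p
  · have := (Finset.sum_eq_zero_iff_of_nonneg
      (fun B _ => Complex.normSq_nonneg (f B))).mp hTrz B (mem_Tset.mpr hB)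
    simpa using Complex.normSq_eq_zero.mp this
  · exact hf.1 B hB

theorem step {p ν : ℕ → ℕ} {a b : ℕ} (hab : a ≠ b) (ha : a < d) (hb : b < d)
    (h1 : p a = ν a + 1) (h2 : ν b = p b + 1)
    (h3 : ∀ k, k ≠ a → k ≠ b → ν k = p k) (hlt : p b < p a) :
    Nat.card ↥(chiOrbits d W χ p) ≤ Nat.card ↥(chiOrbits d W χ ν) := by
  haveI := Efun_fd W χ ν
  rw [← finrank_Efun W χ p, ← finrank_Efun W χ ν]
  have hmem : ∀ f : ↥(Efun W χ p),
      ((Phi0 ν a b).comp (Efun W χ p).subtype) f ∈ Efun W χ ν :=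
    fun f => Phi0_mem W χ f.2
  refine LinearMap.finrank_le_finrank_of_injective
    (f := LinearMap.codRestrict (Efun W χ ν) ((Phi0 ν a b).comp (Efun W χ p).subtype) hmem) ?_
  have hker : ∀ f : ↥(Efun W χ p),
      LinearMap.codRestrict (Efun W χ ν) ((Phi0 ν a b).comp (Efun W χ p).subtype) hmem f = 0
        → f = 0 := by
    intro f hf0
    have hfun : Phi0 ν a b f.1 = 0 := by
      have := congrArg (Subtype.val) hf0
      exact this
    have h0 : ∀ A ∈ TabOfShape d ν, ∑ s ∈ A b, f.1 (mv a b s A) = 0 := by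
      intro A hA
      have := congrFun hfun A
      rwa [Phi0_apply_tab hA] at this
    exact Subtype.ext (key_inj W χ hab ha hb h1 h2 h3 hlt f.2 h0)
  intro f g hfg
  have : f - g = 0 := hker (f - g) (by rw [map_sub, hfg, sub_self])
  exact sub_eq_zero.mp this

end Step


section Chain

def Ssum (p : ℕ → ℕ) (i : ℕ) : ℕ := ∑ k ∈ Finset.range (i + 1), p k

lemma Ssum_succ (p : ℕ → ℕ) (k : ℕ) : Ssum p (k + 1) = Ssum p k + p (k + 1) :=
  Finset.sum_range_succ _ _

lemma Ssum_zero (p : ℕ → ℕ) : Ssum p 0 = p 0 := by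
  simp [Ssum]

lemma Ssum_stable {p : ℕ → ℕ} (hp : IsPartitionOf d p) {i : ℕ} (hi : d ≤ i + 1) :
    Ssum p i = d := by
  rw [Ssum, Finset.range_eq_Ico,
    ← Finset.sum_Ico_consecutive _ (Nat.zero_le d) hi,
    ← Finset.range_eq_Ico]
  have h2 : ∑ k ∈ Finset.Ico d (i + 1), p k = 0 :=
    Finset.sum_eq_zero fun k hk => hp.2.1 k (Finset.mem_Ico.mp hk).1
  rw [h2, hp.2.2, add_zero]

lemma shape_eq {lam mu : ℕ → ℕ} (hlam : IsPartitionOf d lam) (hmu : IsPartitionOf d mu)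
    (h : ∀ i, i < d → Ssum lam i = Ssum mu i) : mu = lam := by
  funext k
  rcases Nat.lt_or_ge k d with hk | hk
  · cases k with
    | zero =>
      have := h 0 hk
      rw [Ssum_zero, Ssum_zero] at this
      omega
    | succ k =>
      have h1 := h (k + 1) hk
      have h2 := h k (by omega)
      rw [Ssum_succ, Ssum_succ] at h1
      omega
  · rw [hmu.2.1 k hk, hlam.2.1 k hk]

theorem dom_card_le (W : Subgroup (Equiv.Perm (Fin d))) (χ : W →* ℂˣ)
    {lam : ℕ → ℕ} (hlam : IsPartitionOf d lam) :
    ∀ m : ℕ, ∀ mu : ℕ → ℕ, IsPartitionOf d mu →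
      (∀ i, Ssum lam i ≤ Ssum mu i) →
      (∑ i ∈ Finset.range d, (Ssum mu i - Ssum lam i)) ≤ m →
      Nat.card ↥(chiOrbits d W χ mu) ≤ Nat.card ↥(chiOrbits d W χ lam) := by
  intro m
  induction m with
  | zero =>
    intro mu hmu hdom hm
    have heq : mu = lam := shape_eq hlam hmu (fun i hi => by
      have hz : ∑ i ∈ Finset.range d, (Ssum mu i - Ssum lam i) = 0 := Nat.le_zero.mp hm
      have := (Finset.sum_eq_zero_iff).mp hz i (Finset.mem_range.mpr hi)
      have := hdom i
      omega)
    rw [heq]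
  | succ m ih =>
    intro mu hmu hdom hm
    by_cases hz : ∑ i ∈ Finset.range d, (Ssum mu i - Ssum lam i) = 0
    · have heq : mu = lam := shape_eq hlam hmu (fun i hi => by
        have := (Finset.sum_eq_zero_iff).mp hz i (Finset.mem_range.mpr hi)
        have := hdom i
        omega)
      rw [heq]
    · -- there is a strict inequality somewhere: construct a one-box move
      have hd0 : 0 < d := by
        by_contra h
        apply hz
        rw [show d = 0 from by omega]
        simp
      obtain ⟨i0, hi0r, hi0⟩ : ∃ i ∈ Finset.range d, 0 < Ssum mu i - Ssum lam i := by
        by_contra h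
        push_neg at h
        exact hz (Finset.sum_eq_zero fun i hi => by have := h i hi; omega)
      have hex : ∃ i, Ssum lam i < Ssum mu i := ⟨i0, by have := hdom i0; omega⟩
      set i := Nat.find hex with hidef
      have hPi : Ssum lam i < Ssum mu i := Nat.find_spec hex
      have hmin : ∀ k, k < i → Ssum lam k = Ssum mu k := fun k hk =>
        le_antisymm (hdom k) (not_lt.mp (Nat.find_min hex hk))
      have hid : i < d := by
        by_contra h
        have h1 : Ssum lam i = d := Ssum_stable hlam (by omega)
        have h2 : Ssum mu i = d := Ssum_stable hmu (by omega)
        omega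
      have hmui : lam i < mu i := by
        by_cases hi0' : i = 0
        · have h5 := hPi
          rw [hi0', Ssum_zero, Ssum_zero] at h5
          rw [hi0']
          exact h5
        · have hprev := hmin (i - 1) (by omega)
          have e1 := Ssum_succ lam (i - 1)
          have e2 := Ssum_succ mu (i - 1)
          rw [show i - 1 + 1 = i from by omega] at e1 e2
          omega
      have hw1 : i < d - 1 := by
        have h1 : Ssum lam (d - 1) = d := Ssum_stable hlam (by omega)
        have h2 : Ssum mu (d - 1) = d := Ssum_stable hmu (by omega)
        have : i ≠ d - 1 := fun h => by rw [h] at hPi; omega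
        omega
      have hw2 : Ssum lam (d - 1) = Ssum mu (d - 1) := by
        rw [Ssum_stable hlam (by omega), Ssum_stable hmu (by omega)]
      have hexj : ∃ j, i < j ∧ Ssum lam j = Ssum mu j := ⟨d - 1, hw1, hw2⟩
      set j0 := Nat.find hexj with hj0def
      have hj0 : i < j0 ∧ Ssum lam j0 = Ssum mu j0 := Nat.find_spec hexj
      have hj0le : j0 ≤ d - 1 := Nat.find_min' hexj ⟨hw1, hw2⟩
      have hj0d : j0 < d := by omega
      have hj0min : ∀ k, i ≤ k → k < j0 → Ssum lam k < Ssum mu k := by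
        intro k hik hkj
        rcases eq_or_lt_of_le hik with h | h
        · rw [← h]; exact hPi
        · have hne : Ssum lam k ≠ Ssum mu k := fun he => (Nat.find_min hexj hkj) ⟨h, he⟩
          exact lt_of_le_of_ne (hdom k) hne
      have hmuj0 : mu j0 < lam j0 := by
        have hprev := hj0min (j0 - 1) (by omega) (by omega)
        have e1 := Ssum_succ lam (j0 - 1)
        have e2 := Ssum_succ mu (j0 - 1)
        rw [show j0 - 1 + 1 = j0 from by omega] at e1 e2
        omega
      have anti_mu : Antitone mu := antitone_nat_of_succ_le hmu.1
      have anti_lam : Antitone lam := antitone_nat_of_succ_le hlam.1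
      have hexv : ∃ k, mu k = mu j0 := ⟨j0, rfl⟩
      set j := Nat.find hexv with hjdef
      have hjval : mu j = mu j0 := Nat.find_spec hexv
      have hjle : j ≤ j0 := Nat.find_min' hexv rfl
      have hlamij : lam j0 ≤ lam i := anti_lam (le_of_lt hj0.1)
      have hij : i < j := by
        by_contra h
        have : mu i ≤ mu j := anti_mu (not_lt.mp h)
        omega
      have hjprev : mu j < mu (j - 1) := by
        have hne : mu (j - 1) ≠ mu j0 := Nat.find_min hexv (by omega)
        have : mu j ≤ mu (j - 1) := anti_mu (by omega)
        omega
      set i' := Nat.findGreatest (fun k => mu k = mu i) (j - 1) with hi'def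
      have hi'spec : mu i' = mu i :=
        Nat.findGreatest_spec (P := fun k => mu k = mu i) (n := j - 1) (m := i) (by omega) rfl
      have hi'ge : i ≤ i' :=
        Nat.le_findGreatest (P := fun k => mu k = mu i) (n := j - 1) (m := i) (by omega) rfl
      have hi'le : i' ≤ j - 1 := Nat.findGreatest_le (n := j - 1)
      have hi'j : i' < j := by omega
      have hsucc : i' + 1 ≠ j → mu (i' + 1) < mu i' := by
        intro h
        have hne : mu (i' + 1) ≠ mu i :=
          Nat.findGreatest_is_greatest (P := fun k => mu k = mu i) (n := j - 1)
            (by omega) (by omega)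
        have := hmu.1 i'
        omega
      have hgap : mu j + 2 ≤ mu i' := by omega
      have hjd : j < d := by omega
      have hi'd : i' < d := by omega
      set ν : ℕ → ℕ := fun k => if k = i' then mu i' - 1 else if k = j then mu j + 1 else mu k
        with hνdef
      have νd1 : ν i' = mu i' - 1 := by simp [hνdef]
      have νd2 : ν j = mu j + 1 := by simp [hνdef, show j ≠ i' from by omega]
      have νd3 : ∀ k, k ≠ i' → k ≠ j → ν k = mu k := fun k u v => by simp [hνdef, u, v]
      have hνpart : IsPartitionOf d ν := by
        refine ⟨?_, ?_, ?_⟩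
        · intro k
          by_cases hk : k = i'
          · rw [hk, νd1]
            by_cases hk2 : i' + 1 = j
            · rw [hk2, νd2]
              omega
            · rw [νd3 _ (by omega) hk2]
              have := hsucc hk2
              omega
          · by_cases hk2 : k = j
            · rw [hk2, νd2, νd3 (j + 1) (by omega) (by omega)]
              have := hmu.1 j
              omega
            · rw [νd3 k hk hk2]
              by_cases hk3 : k + 1 = i'
              · rw [hk3, νd1]
                have : mu i' ≤ mu k := anti_mu (by omega)
                omega
              · by_cases hk4 : k + 1 = j
                · rw [hk4, νd2]
                  have : mu j < mu k := by
                    rw [show k = j - 1 from by omega]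
                    exact hjprev
                  omega
                · rw [νd3 _ hk3 hk4]
                  exact hmu.1 k
        · intro k hk
          rw [νd3 k (by omega) (by omega)]
          exact hmu.2.1 k hk
        · have hir : i' ∈ Finset.range d := Finset.mem_range.mpr hi'd
          have hjr : j ∈ (Finset.range d).erase i' :=
            Finset.mem_erase.mpr ⟨by omega, Finset.mem_range.mpr hjd⟩
          have e1 := (Finset.add_sum_erase _ ν hir).symm
          have e2 := (Finset.add_sum_erase _ ν hjr).symm
          have e3 := (Finset.add_sum_erase _ mu hir).symm
          have e4 := (Finset.add_sum_erase _ mu hjr).symm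
          have hrest : ∑ k ∈ ((Finset.range d).erase i').erase j, ν k
              = ∑ k ∈ ((Finset.range d).erase i').erase j, mu k := by
            refine Finset.sum_congr rfl fun k hk => ?_
            have h1 := (Finset.mem_erase.mp hk).1
            have h2 := (Finset.mem_erase.mp (Finset.mem_erase.mp hk).2).1
            exact νd3 k h2 h1
          have hsum := hmu.2.2
          omega
      have hSν : ∀ k, (Ssum ν k = Ssum mu k ∧ (k < i' ∨ j ≤ k))
          ∨ (Ssum ν k + 1 = Ssum mu k ∧ i' ≤ k ∧ k < j) := by
        intro k
        induction k with
        | zero =>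
          by_cases h0 : i' = 0
          · right
            have hv : ν 0 = mu 0 - 1 := by rw [← h0]; exact νd1
            have hm0 : mu 0 = mu i' := by rw [h0]
            refine ⟨?_, by omega, by omega⟩
            rw [Ssum_zero, Ssum_zero]
            omega
          · left
            refine ⟨?_, by omega⟩
            rw [Ssum_zero, Ssum_zero, νd3 0 (by omega) (by omega)]
        | succ k ihk =>
          have eν := Ssum_succ ν k
          have eμ := Ssum_succ mu k
          by_cases hk1 : k + 1 = i'
          · right
            have hv : ν (k + 1) = mu i' - 1 := by rw [hk1]; exact νd1
            have hm0 : mu (k + 1) = mu i' := by rw [hk1]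
            refine ⟨?_, by omega, by omega⟩
            rcases ihk with ⟨h, hr | hr⟩ | ⟨h, hr1, hr2⟩ <;> omega
          · by_cases hk2 : k + 1 = j
            · left
              have hv : ν (k + 1) = mu j + 1 := by rw [hk2]; exact νd2
              have hm0 : mu (k + 1) = mu j := by rw [hk2]
              refine ⟨?_, by omega⟩
              rcases ihk with ⟨h, hr | hr⟩ | ⟨h, hr1, hr2⟩ <;> omega
            · have hv : ν (k + 1) = mu (k + 1) := νd3 _ hk1 hk2
              rcases ihk with ⟨h, hr | hr⟩ | ⟨h, hr1, hr2⟩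
              · exact Or.inl ⟨by omega, by omega⟩
              · exact Or.inl ⟨by omega, by omega⟩
              · exact Or.inr ⟨by omega, by omega, by omega⟩
      have hdomν : ∀ k, Ssum lam k ≤ Ssum ν k := by
        intro k
        rcases hSν k with ⟨h, _⟩ | ⟨h, hr1, hr2⟩
        · have := hdom k; omega
        · have := hj0min k (by omega) (by omega); omega
      have hmeas : ∑ k ∈ Finset.range d, (Ssum ν k - Ssum lam k) ≤ m := by
        have hlt2 : ∑ k ∈ Finset.range d, (Ssum ν k - Ssum lam k)
            < ∑ k ∈ Finset.range d, (Ssum mu k - Ssum lam k) := by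
          refine Finset.sum_lt_sum (fun k _ => ?_) ⟨i', Finset.mem_range.mpr hi'd, ?_⟩
          · have h1 := hdomν k
            have h2 := hdom k
            rcases hSν k with ⟨h, _⟩ | ⟨h, _, _⟩ <;> omega
          · have h1 := hdomν i'
            rcases hSν i' with ⟨h, hr | hr⟩ | ⟨h, _, _⟩ <;> omega
        omega
      have hstep := step W χ (p := mu) (ν := ν) (a := i') (b := j)
        (by omega) hi'd hjd (by omega) νd2 (fun k u v => νd3 k u v) (by omega)
      exact le_trans hstep (ih ν hνpart hdomν hmeas)

end Chain

end
end S18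

/-- If `λ ≤ μ` in dominance order then `n_{λ;χ} ≥ n_{μ;χ}`: the number of `χ`-orbits
of `W` on tabloids of shape `λ` is at least the number on tabloids of shape `μ`. -/
theorem stmt18 (d : ℕ) (W : Subgroup (Equiv.Perm (Fin d))) (χ : W →* ℂˣ)
    (lam mu : ℕ → ℕ) (hlam : IsPartitionOf d lam) (hmu : IsPartitionOf d mu)
    (hdom : ∀ i : ℕ, ∑ k ∈ Finset.range (i + 1), lam k ≤ ∑ k ∈ Finset.range (i + 1), mu k) :
    Nat.card (chiOrbits d W χ mu) ≤ Nat.card (chiOrbits d W χ lam) := by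
  exact S18.dom_card_le W χ hlam _ mu hmu (fun i => hdom i) le_rfl
end
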